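/- arXiv:2010.06158 — 7 statements merged into one kernel-verified Lean document; each statement's English description precedes it below -/
import Mathlib

section
/- Let T1, T2 be ultrametrics on [N] and a, b ∈ ℝ. Then the tropical linear combination a ⊙ T1 ⊞ b ⊙ T2, defined coordinatewise by max(a + w_{ij}, b + w'_{ij}), is again an ultrametric. In other words, the set of ultrametrics on [N] is tropically convex. -/
/-- The maximum among three reals is attained at least twice. -/
def maxTwice (a b c : ℝ) : Prop :=
  (a = b ∧ c ≤ a) ∨ (a = c ∧ b ≤ a) ∨ (b = c ∧ a ≤ b)

/-- Three-point (ultrametric) condition for a pairwise-distance vector. -/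
def IsUltrametricVec {N : ℕ} (w : Fin N → Fin N → ℝ) : Prop :=
  ∀ i j k : Fin N, i ≠ j → i ≠ k → j ≠ k →
    maxTwice (w i j) (w i k) (w j k)

/-- Tropical convexity of the space of ultrametrics: a tropical linear
combination `a ⊙ T₁ ⊞ b ⊙ T₂` of ultrametrics is an ultrametric. -/
theorem tropical_combination_ultrametric {N : ℕ}
    (w w' : Fin N → Fin N → ℝ) (a b : ℝ)
    (hw : IsUltrametricVec w) (hw' : IsUltrametricVec w') :
    IsUltrametricVec (fun i j => max (a + w i j) (b + w' i j)) := by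
  intro i j k hij hik hjk
  have h1 := hw i j k hij hik hjk
  have h2 := hw' i j k hij hik hjk
  simp only [maxTwice, max_def] at h1 h2 ⊢
  split_ifs <;>
  rcases h1 with ⟨e1, l1⟩ | ⟨e1, l1⟩ | ⟨e1, l1⟩ <;>
  rcases h2 with ⟨e2, l2⟩ | ⟨e2, l2⟩ | ⟨e2, l2⟩ <;>
    first
      | (left; constructor <;> linarith)
      | (right; left; constructor <;> linarith)
      | (right; right; constructor <;> linarith)
end

section
/- Let F be a tree topology on [N]. If F is bifurcated, then for any distinct i, j, k ∈ [N], exactly two of the three closures cl_F({i,j}), cl_F({i,k}), cl_F({j,k}) are equal, and the third is a proper subset of the common value. -/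
/-- A tree topology on `[N]`: a nested family of clades. -/
def IsTreeTopology {N : ℕ} (F : Finset (Finset (Fin N))) : Prop :=
  (∀ S ∈ F, 2 ≤ S.card ∧ S.card ≤ N - 1) ∧
  (∀ S₁ ∈ F, ∀ S₂ ∈ F, S₁ ≠ S₂ →
    S₁ ⊂ S₂ ∨ S₂ ⊂ S₁ ∨ S₁ ∩ S₂ = ∅)

/-- The closure of a pair `p` in `F`: the intersection of all clades of `F`
containing `p`, together with the ground set `[N]`.  For a tree topology this
is the minimal clade containing `p`, or `[N]` if no clade contains `p`. -/
def cl {N : ℕ} (F : Finset (Finset (Fin N))) (p : Finset (Fin N)) :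
    Finset (Fin N) :=
  ((insert Finset.univ F).filter (fun S => p ⊆ S)).inf id

/-- `F̄ = {S ∈ F : |S| ≥ 3} ∪ {[N]}`. -/
def Fbar {N : ℕ} (F : Finset (Finset (Fin N))) : Finset (Finset (Fin N)) :=
  insert Finset.univ (F.filter (fun S => 3 ≤ S.card))

/-- `F` is bifurcated. -/
def Bifurcated {N : ℕ} (F : Finset (Finset (Fin N))) : Prop :=
  ∀ S ∈ Fbar F,
    (∃ S' ∈ F, S' ⊂ S ∧ S'.card = S.card - 1) ∨
    (∃ S' ∈ F, ∃ S'' ∈ F, S' ⊂ S ∧ S'' ⊂ S ∧ S' ∪ S'' = S)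

lemma cl_spec {N : ℕ} {F : Finset (Finset (Fin N))} (hF : IsTreeTopology F)
    {p : Finset (Fin N)} (hp : p.Nonempty) :
    cl F p ∈ insert Finset.univ F ∧ p ⊆ cl F p ∧
      ∀ S ∈ insert Finset.univ F, p ⊆ S → cl F p ⊆ S := by
  classical
  set G := (insert Finset.univ F).filter (fun S => p ⊆ S) with hG
  have huniv : Finset.univ ∈ G := by
    simp [hG]
  obtain ⟨m, hmG, hmin⟩ := G.exists_min_image Finset.card ⟨_, huniv⟩
  have hm := Finset.mem_filter.1 hmG
  have hmono : ∀ S ∈ G, m ⊆ S := by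
    intro S hS
    have hS' := Finset.mem_filter.1 hS
    rcases eq_or_ne m S with rfl | hne
    · exact subset_rfl
    rcases Finset.mem_insert.1 hS'.1 with rfl | hSF
    · exact Finset.subset_univ m
    rcases Finset.mem_insert.1 hm.1 with rfl | hmF
    · have hcard : S.card = Fintype.card (Fin N) := by
        have h1 : S.card ≤ Fintype.card (Fin N) := Finset.card_le_univ S
        have h2 : Fintype.card (Fin N) ≤ S.card := by
          simpa using hmin S hS
        omega
      have : S = Finset.univ := Finset.eq_univ_of_card S hcard
      simp [this]
    · rcases hF.2 m hmF S hSF hne with h | h | h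
      · exact h.subset
      · exact absurd (Finset.card_lt_card h) (not_lt.2 (hmin S hS))
      · obtain ⟨x, hx⟩ := hp
        exact absurd h (by
          intro he
          have : x ∈ m ∩ S := Finset.mem_inter.2 ⟨hm.2 hx, hS'.2 hx⟩
          simp [he] at this)
  have hcl : cl F p = m :=
    le_antisymm (Finset.inf_le hmG) (Finset.le_inf hmono)
  refine ⟨hcl ▸ hm.1, hcl ▸ hm.2, ?_⟩
  intro S hS hpS
  rw [hcl]
  exact hmono S (Finset.mem_filter.2 ⟨hS, hpS⟩)

lemma cl_comp {N : ℕ} {F : Finset (Finset (Fin N))} (hF : IsTreeTopology F)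
    {p q : Finset (Fin N)} {x : Fin N} (hxp : x ∈ p) (hxq : x ∈ q) :
    cl F p ⊆ cl F q ∨ cl F q ⊆ cl F p := by
  obtain ⟨hPmem, hPsub, _⟩ := cl_spec hF ⟨x, hxp⟩
  obtain ⟨hQmem, hQsub, _⟩ := cl_spec hF ⟨x, hxq⟩
  rcases eq_or_ne (cl F p) (cl F q) with h | hne
  · exact Or.inl h.le
  rcases Finset.mem_insert.1 hPmem with hP | hP
  · exact Or.inr (hP ▸ Finset.subset_univ _)
  rcases Finset.mem_insert.1 hQmem with hQ | hQ
  · exact Or.inl (hQ ▸ Finset.subset_univ _)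
  rcases hF.2 _ hP _ hQ hne with h | h | h
  · exact Or.inl h.subset
  · exact Or.inr h.subset
  · exfalso
    have : x ∈ cl F p ∩ cl F q := Finset.mem_inter.2 ⟨hPsub hxp, hQsub hxq⟩
    simp [h] at this

lemma key {N : ℕ} {F : Finset (Finset (Fin N))} (hF : IsTreeTopology F)
    (hbif : Bifurcated F) {a b c : Fin N}
    (hab : a ≠ b) (hac : a ≠ c) (hbc : b ≠ c)
    (h1 : cl F {a, b} ⊆ cl F {a, c}) (h2 : cl F {a, b} ⊆ cl F {b, c}) :
    cl F {a, c} = cl F {b, c} ∧ cl F {a, b} ⊂ cl F {a, c} := by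
  classical
  obtain ⟨hAmem, hAsub, hAmin⟩ := cl_spec hF (p := ({a, b} : Finset (Fin N))) ⟨a, by simp⟩
  obtain ⟨hBmem, hBsub, hBmin⟩ := cl_spec hF (p := ({a, c} : Finset (Fin N))) ⟨a, by simp⟩
  obtain ⟨hCmem, hCsub, hCmin⟩ := cl_spec hF (p := ({b, c} : Finset (Fin N))) ⟨b, by simp⟩
  have haA : a ∈ cl F {a, b} := hAsub (by simp)
  have hbA : b ∈ cl F {a, b} := hAsub (by simp)
  have hcB : c ∈ cl F {a, c} := hBsub (by simp)
  have hcC : c ∈ cl F {b, c} := hCsub (by simp)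
  -- B = C
  have hCB : cl F {b, c} ⊆ cl F {a, c} :=
    hCmin _ hBmem (Finset.insert_subset (h1 hbA) (by simpa using hcB))
  have hBC : cl F {a, c} ⊆ cl F {b, c} :=
    hBmin _ hCmem (Finset.insert_subset (h2 haA) (by simpa using hcC))
  have heqBC : cl F {a, c} = cl F {b, c} := subset_antisymm hBC hCB
  refine ⟨heqBC, h1.ssubset_of_ne ?_⟩
  intro heq
  -- now all three closures are equal to M
  set M := cl F {a, b} with hM
  have hMac : cl F {a, c} = M := heq.symm
  have hMbc : cl F {b, c} = M := (heqBC ▸ heq).symm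
  have haM : a ∈ M := haA
  have hbM : b ∈ M := hbA
  have hcM : c ∈ M := hMac ▸ hcB
  -- no proper subset clade contains two of a, b, c
  have hpair : ∀ T ∈ F, T ⊂ M →
      ¬(a ∈ T ∧ b ∈ T) ∧ ¬(a ∈ T ∧ c ∈ T) ∧ ¬(b ∈ T ∧ c ∈ T) := by
    intro T hTF hTM
    refine ⟨?_, ?_, ?_⟩ <;> rintro ⟨hx, hy⟩
    · exact hTM.not_subset (hM ▸ hAmin T (Finset.mem_insert_of_mem hTF)
        (Finset.insert_subset hx (by simpa using hy)))
    · exact hTM.not_subset (hMac ▸ hBmin T (Finset.mem_insert_of_mem hTF)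
        (Finset.insert_subset hx (by simpa using hy)))
    · exact hTM.not_subset (hMbc ▸ hCmin T (Finset.mem_insert_of_mem hTF)
        (Finset.insert_subset hx (by simpa using hy)))
  -- M ∈ Fbar F
  have hcard3 : 3 ≤ M.card := by
    have hsub : ({a, b, c} : Finset (Fin N)) ⊆ M :=
      Finset.insert_subset haM (Finset.insert_subset hbM (by simpa using hcM))
    have h3 : ({a, b, c} : Finset (Fin N)).card = 3 := by
      rw [Finset.card_insert_of_notMem (by simp [hab, hac]),
        Finset.card_insert_of_notMem (by simp [hbc])]
      simp
    have := Finset.card_le_card hsub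
    omega
  have hMbar : M ∈ Fbar F := by
    rcases Finset.mem_insert.1 (hM ▸ hAmem) with h | h
    · exact Finset.mem_insert.2 (Or.inl h)
    · exact Finset.mem_insert.2 (Or.inr (Finset.mem_filter.2 ⟨h, hcard3⟩))
  rcases hbif M hMbar with ⟨S', hS'F, hS'M, hS'card⟩ | ⟨S', hS'F, S'', hS''F, hS'M, hS''M, huni⟩
  · -- case (a): S' misses exactly one element of M
    obtain ⟨P1, P2, P3⟩ := hpair S' hS'F hS'M
    have hsd : (M \ S').card = 1 := by
      rw [Finset.card_sdiff_of_subset hS'M.subset, hS'card]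
      omega
    have htwo : ∀ x y : Fin N, x ≠ y → x ∈ M → y ∈ M → x ∉ S' → y ∉ S' → False := by
      intro x y hxy hxM hyM hxS hyS
      have hsub2 : ({x, y} : Finset (Fin N)) ⊆ M \ S' := by
        intro z hz
        rcases Finset.mem_insert.1 hz with rfl | hz
        · exact Finset.mem_sdiff.2 ⟨hxM, hxS⟩
        · rw [Finset.mem_singleton.1 hz]
          exact Finset.mem_sdiff.2 ⟨hyM, hyS⟩
      have h2 : ({x, y} : Finset (Fin N)).card = 2 := Finset.card_pair hxy
      have := Finset.card_le_card hsub2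
      omega
    by_cases ha : a ∈ S' <;> by_cases hb : b ∈ S' <;> by_cases hc : c ∈ S'
    · exact P1 ⟨ha, hb⟩
    · exact P1 ⟨ha, hb⟩
    · exact P2 ⟨ha, hc⟩
    · exact htwo b c hbc hbM hcM hb hc
    · exact P3 ⟨hb, hc⟩
    · exact htwo a c hac haM hcM ha hc
    · exact htwo a b hab haM hbM ha hb
    · exact htwo a b hab haM hbM ha hb
  · -- case (b): pigeonhole into the two parts
    obtain ⟨P1, P2, P3⟩ := hpair S' hS'F hS'M
    obtain ⟨Q1, Q2, Q3⟩ := hpair S'' hS''F hS''M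
    have ha' : a ∈ S' ∪ S'' := huni ▸ haM
    have hb' : b ∈ S' ∪ S'' := huni ▸ hbM
    have hc' : c ∈ S' ∪ S'' := huni ▸ hcM
    rcases Finset.mem_union.1 ha' with ha | ha <;>
      rcases Finset.mem_union.1 hb' with hb | hb <;>
        rcases Finset.mem_union.1 hc' with hc | hc
    · exact P1 ⟨ha, hb⟩
    · exact P1 ⟨ha, hb⟩
    · exact P2 ⟨ha, hc⟩
    · exact Q3 ⟨hb, hc⟩
    · exact P3 ⟨hb, hc⟩
    · exact Q2 ⟨ha, hc⟩
    · exact Q1 ⟨ha, hb⟩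
    · exact Q1 ⟨ha, hb⟩

theorem bifurcated_closure_trichotomy {N : ℕ}
    (F : Finset (Finset (Fin N))) (hF : IsTreeTopology F)
    (hbif : Bifurcated F) (i j k : Fin N)
    (hij : i ≠ j) (hik : i ≠ k) (hjk : j ≠ k) :
    (cl F {i, j} = cl F {i, k} ∧ cl F {j, k} ⊂ cl F {i, j}) ∨
    (cl F {i, j} = cl F {j, k} ∧ cl F {i, k} ⊂ cl F {i, j}) ∨
    (cl F {i, k} = cl F {j, k} ∧ cl F {i, j} ⊂ cl F {i, k}) := by
  set Goal := (cl F {i, j} = cl F {i, k} ∧ cl F {j, k} ⊂ cl F {i, j}) ∨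
    (cl F {i, j} = cl F {j, k} ∧ cl F {i, k} ⊂ cl F {i, j}) ∨
    (cl F {i, k} = cl F {j, k} ∧ cl F {i, j} ⊂ cl F {i, k}) with hGoal
  have hAB : cl F {i, j} ⊆ cl F {i, k} ∨ cl F {i, k} ⊆ cl F {i, j} :=
    cl_comp hF (x := i) (by simp) (by simp)
  have hAC : cl F {i, j} ⊆ cl F {j, k} ∨ cl F {j, k} ⊆ cl F {i, j} :=
    cl_comp hF (x := j) (by simp) (by simp)
  have hBC : cl F {i, k} ⊆ cl F {j, k} ∨ cl F {j, k} ⊆ cl F {i, k} :=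
    cl_comp hF (x := k) (by simp) (by simp)
  have case1 : cl F {i, j} ⊆ cl F {i, k} → cl F {i, j} ⊆ cl F {j, k} → Goal :=
    fun h1 h2 => Or.inr (Or.inr (key hF hbif hij hik hjk h1 h2))
  have case2 : cl F {i, k} ⊆ cl F {i, j} → cl F {i, k} ⊆ cl F {j, k} → Goal := by
    intro h1 h2
    have h2' : cl F {i, k} ⊆ cl F {k, j} := by rwa [Finset.pair_comm k j]
    have hres := key hF hbif hik hij hjk.symm h1 h2'
    rw [Finset.pair_comm k j] at hres
    exact Or.inr (Or.inl hres)
  have case3 : cl F {j, k} ⊆ cl F {i, j} → cl F {j, k} ⊆ cl F {i, k} → Goal := by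
    intro h1 h2
    have h1' : cl F {j, k} ⊆ cl F {j, i} := by rwa [Finset.pair_comm j i]
    have h2' : cl F {j, k} ⊆ cl F {k, i} := by rwa [Finset.pair_comm k i]
    have hres := key hF hbif hjk hij.symm hik.symm h1' h2'
    rw [Finset.pair_comm j i, Finset.pair_comm k i] at hres
    exact Or.inl hres
  rcases hAB with h1 | h1 <;> rcases hAC with h2 | h2
  · exact case1 h1 h2
  · exact case3 h2 (h2.trans h1)
  · rcases hBC with h3 | h3
    · exact case2 h1 h3
    · exact case3 (h3.trans h1) h3
  · rcases hBC with h3 | h3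
    · exact case2 h1 h3
    · exact case3 h2 h3
end

section
/- Let N ≥ 3 and let F be a tree topology on [N]. Then F is full dimensional (i.e., |F| = N − 2) if and only if F is bifurcated. -/
section Aux

variable {α : Type*} [DecidableEq α]

/-- A laminar family. -/
def Laminar (G : Finset (Finset α)) : Prop :=
  ∀ S₁ ∈ G, ∀ S₂ ∈ G, S₁ ≠ S₂ → S₁ ⊂ S₂ ∨ S₂ ⊂ S₁ ∨ S₁ ∩ S₂ = ∅

/-- The bifurcation condition for a single set. -/
abbrev Cond (G : Finset (Finset α)) (S : Finset α) : Prop :=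
  (∃ S' ∈ G, S' ⊂ S ∧ S'.card = S.card - 1) ∨
  (∃ S' ∈ G, ∃ S'' ∈ G, S' ⊂ S ∧ S'' ⊂ S ∧ S' ∪ S'' = S)

lemma Laminar.mono {G G' : Finset (Finset α)} (h : G' ⊆ G) (hG : Laminar G) : Laminar G' :=
  fun S₁ h₁ S₂ h₂ hne => hG S₁ (h h₁) S₂ (h h₂) hne

lemma Cond.mono {G G' : Finset (Finset α)} (h : G ⊆ G') {S : Finset α} (hc : Cond G S) :
    Cond G' S := by
  rcases hc with ⟨W, hW, h1, h2⟩ | ⟨W, hW, W2, hW2, h1, h2, h3⟩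
  · exact Or.inl ⟨W, h hW, h1, h2⟩
  · exact Or.inr ⟨W, h hW, W2, h hW2, h1, h2, h3⟩

/-- Cardinality bound for a laminar family of proper subsets of `T`, each of size `≥ 2`. -/
lemma laminar_card_le : ∀ n : ℕ, ∀ T : Finset α, T.card ≤ n →
    ∀ G : Finset (Finset α), Laminar G → (∀ S ∈ G, 2 ≤ S.card ∧ S ⊂ T) →
    G.card ≤ T.card - 2 := by
  intro n
  induction n with
  | zero =>
    intro T hT G hG hmem
    have : G = ∅ := by
      apply Finset.eq_empty_of_forall_notMem
      intro S hS
      have h := Finset.card_lt_card (hmem S hS).2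
      have := (hmem S hS).1
      omega
    simp [this]
  | succ n ih =>
    intro T hT G hG hmem
    rcases G.eq_empty_or_nonempty with rfl | hGne
    · simp
    obtain ⟨M, hM, hmax⟩ := G.exists_max_image Finset.card hGne
    have hM2 : 2 ≤ M.card := (hmem M hM).1
    have hMT : M ⊂ T := (hmem M hM).2
    have hMc : M.card < T.card := Finset.card_lt_card hMT
    have hcd : (T \ M).card + M.card = T.card := Finset.card_sdiff_add_card_eq_card hMT.subset
    set A := G.filter (fun S => S ⊆ M) with hAdef
    set B := G.filter (fun S => ¬ S ⊆ M) with hBdef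
    have hMA : M ∈ A := Finset.mem_filter.mpr ⟨hM, Finset.Subset.refl M⟩
    set A' := A.erase M with hA'def
    have hABc : A.card + B.card = G.card := Finset.card_filter_add_card_filter_not _
    have hAc : A'.card = A.card - 1 := Finset.card_erase_of_mem hMA
    have hApos : 1 ≤ A.card := Finset.card_pos.mpr ⟨M, hMA⟩
    have hA'mem : ∀ S ∈ A', 2 ≤ S.card ∧ S ⊂ M := by
      intro S hS
      obtain ⟨hne, hSA⟩ := Finset.mem_erase.mp hS
      obtain ⟨hSG, hsub⟩ := Finset.mem_filter.mp hSA
      exact ⟨(hmem S hSG).1, Finset.ssubset_iff_subset_ne.mpr ⟨hsub, hne⟩⟩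
    have hA'G : A' ⊆ G := (A.erase_subset M).trans (Finset.filter_subset _ G)
    have hBmem : ∀ S ∈ B, S ⊆ T \ M := by
      intro S hS
      obtain ⟨hSG, hns⟩ := Finset.mem_filter.mp hS
      have hne : S ≠ M := fun h => hns (h ▸ Finset.Subset.refl M)
      have hdis : S ∩ M = ∅ := by
        rcases hG S hSG M hM hne with h | h | h
        · exact absurd h.subset hns
        · exact absurd (Finset.card_lt_card h) (by have := hmax S hSG; omega)
        · exact h
      intro x hx
      refine Finset.mem_sdiff.mpr ⟨(hmem S hSG).2.subset hx, fun hxM => ?_⟩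
      have : x ∈ S ∩ M := Finset.mem_inter.mpr ⟨hx, hxM⟩
      simp [hdis] at this
    set B' := B.erase (T \ M) with hB'def
    have hB'G : B' ⊆ G := (B.erase_subset _).trans (Finset.filter_subset _ G)
    have hB'mem : ∀ S ∈ B', 2 ≤ S.card ∧ S ⊂ T \ M := by
      intro S hS
      obtain ⟨hne, hSB⟩ := Finset.mem_erase.mp hS
      exact ⟨(hmem S (Finset.mem_filter.mp hSB).1).1,
        Finset.ssubset_iff_subset_ne.mpr ⟨hBmem S hSB, hne⟩⟩
    have h1 : A'.card ≤ M.card - 2 := ih M (by omega) A' (hG.mono hA'G) hA'mem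
    have h2 : B'.card ≤ (T \ M).card - 2 := ih (T \ M) (by omega) B' (hG.mono hB'G) hB'mem
    by_cases hTM : T \ M ∈ B
    · have hBc : B'.card = B.card - 1 := Finset.card_erase_of_mem hTM
      have hBpos : 1 ≤ B.card := Finset.card_pos.mpr ⟨_, hTM⟩
      have hTM2 : 2 ≤ (T \ M).card := (hmem _ (Finset.mem_filter.mp hTM).1).1
      omega
    · have hBB : B' = B := Finset.erase_eq_of_notMem hTM
      rw [hBB] at h2
      omega

/-- If a laminar family of proper subsets of `T` has the maximal cardinality
`|T| - 2`, then the bifurcation condition holds for every big set. -/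
lemma cond_of_card_eq : ∀ n : ℕ, ∀ T : Finset α, T.card ≤ n →
    ∀ G : Finset (Finset α), Laminar G → (∀ S ∈ G, 2 ≤ S.card ∧ S ⊂ T) →
    G.card = T.card - 2 → ∀ S ∈ insert T G, 3 ≤ S.card → Cond G S := by
  intro n
  induction n with
  | zero =>
    intro T hT G hG hmem heq S hS hS3
    exfalso
    rcases Finset.mem_insert.mp hS with rfl | hSG
    · omega
    · have := (hmem S hSG).2
      have := Finset.card_lt_card this
      omega
  | succ n ih =>
    intro T hT G hG hmem heq S₀ hS₀ hS₀3
    rcases G.eq_empty_or_nonempty with rfl | hGne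
    · exfalso
      rcases Finset.mem_insert.mp hS₀ with rfl | hSG
      · simp at heq; omega
      · simp at hSG
    obtain ⟨M, hM, hmax⟩ := G.exists_max_image Finset.card hGne
    have hM2 : 2 ≤ M.card := (hmem M hM).1
    have hMT : M ⊂ T := (hmem M hM).2
    have hMc : M.card < T.card := Finset.card_lt_card hMT
    have hcd : (T \ M).card + M.card = T.card := Finset.card_sdiff_add_card_eq_card hMT.subset
    set A := G.filter (fun S => S ⊆ M) with hAdef
    set B := G.filter (fun S => ¬ S ⊆ M) with hBdef
    have hMA : M ∈ A := Finset.mem_filter.mpr ⟨hM, Finset.Subset.refl M⟩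
    set A' := A.erase M with hA'def
    have hABc : A.card + B.card = G.card := Finset.card_filter_add_card_filter_not _
    have hAc : A'.card = A.card - 1 := Finset.card_erase_of_mem hMA
    have hApos : 1 ≤ A.card := Finset.card_pos.mpr ⟨M, hMA⟩
    have hA'mem : ∀ S ∈ A', 2 ≤ S.card ∧ S ⊂ M := by
      intro S hS
      obtain ⟨hne, hSA⟩ := Finset.mem_erase.mp hS
      obtain ⟨hSG, hsub⟩ := Finset.mem_filter.mp hSA
      exact ⟨(hmem S hSG).1, Finset.ssubset_iff_subset_ne.mpr ⟨hsub, hne⟩⟩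
    have hA'G : A' ⊆ G := (A.erase_subset M).trans (Finset.filter_subset _ G)
    have hBmem : ∀ S ∈ B, S ⊆ T \ M := by
      intro S hS
      obtain ⟨hSG, hns⟩ := Finset.mem_filter.mp hS
      have hne : S ≠ M := fun h => hns (h ▸ Finset.Subset.refl M)
      have hdis : S ∩ M = ∅ := by
        rcases hG S hSG M hM hne with h | h | h
        · exact absurd h.subset hns
        · exact absurd (Finset.card_lt_card h) (by have := hmax S hSG; omega)
        · exact h
      intro x hx
      refine Finset.mem_sdiff.mpr ⟨(hmem S hSG).2.subset hx, fun hxM => ?_⟩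
      have : x ∈ S ∩ M := Finset.mem_inter.mpr ⟨hx, hxM⟩
      simp [hdis] at this
    set B' := B.erase (T \ M) with hB'def
    have hB'G : B' ⊆ G := (B.erase_subset _).trans (Finset.filter_subset _ G)
    have hB'mem : ∀ S ∈ B', 2 ≤ S.card ∧ S ⊂ T \ M := by
      intro S hS
      obtain ⟨hne, hSB⟩ := Finset.mem_erase.mp hS
      exact ⟨(hmem S (Finset.mem_filter.mp hSB).1).1,
        Finset.ssubset_iff_subset_ne.mpr ⟨hBmem S hSB, hne⟩⟩
    have h1 : A'.card ≤ M.card - 2 := laminar_card_le n M (by omega) A' (hG.mono hA'G) hA'mem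
    have h2 : B'.card ≤ (T \ M).card - 2 :=
      laminar_card_le n (T \ M) (by omega) B' (hG.mono hB'G) hB'mem
    -- membership case analysis helper
    have hsplit : ∀ S ∈ G, S = M ∨ S ∈ A' ∨ S ∈ B := by
      intro S hS
      by_cases hSM : S ⊆ M
      · by_cases hSeq : S = M
        · exact Or.inl hSeq
        · exact Or.inr (Or.inl (Finset.mem_erase.mpr ⟨hSeq, Finset.mem_filter.mpr ⟨hS, hSM⟩⟩))
      · exact Or.inr (Or.inr (Finset.mem_filter.mpr ⟨hS, hSM⟩))
    by_cases hTM : T \ M ∈ B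
    · -- binary split at the top: M and T \ M
      have hBc : B'.card = B.card - 1 := Finset.card_erase_of_mem hTM
      have hBpos : 1 ≤ B.card := Finset.card_pos.mpr ⟨_, hTM⟩
      have hTMG : T \ M ∈ G := (Finset.mem_filter.mp hTM).1
      have hTM2 : 2 ≤ (T \ M).card := (hmem _ hTMG).1
      have hA'eq : A'.card = M.card - 2 := by omega
      have hB'eq : B'.card = (T \ M).card - 2 := by omega
      have ihA := ih M (by omega) A' (hG.mono hA'G) hA'mem hA'eq
      have ihB := ih (T \ M) (by omega) B' (hG.mono hB'G) hB'mem hB'eq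
      rcases Finset.mem_insert.mp hS₀ with hTeq | hSG
      · -- S₀ = T : use the two children M and T \ M
        subst hTeq
        refine Or.inr ⟨M, hM, S₀ \ M, hTMG, hMT, ?_, ?_⟩
        · exact Finset.sdiff_ssubset hMT.subset (Finset.card_pos.mp (by omega))
        · exact Finset.union_sdiff_of_subset hMT.subset
      · rcases hsplit S₀ hSG with rfl | hSA' | hSB
        · exact (ihA S₀ (Finset.mem_insert_self _ _) hS₀3).mono hA'G
        · exact (ihA S₀ (Finset.mem_insert_of_mem hSA') hS₀3).mono hA'G
        · by_cases hSeq : S₀ = T \ M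
          · exact (ihB S₀ (hSeq ▸ Finset.mem_insert_self _ _) hS₀3).mono hB'G
          · exact (ihB S₀ (Finset.mem_insert_of_mem (Finset.mem_erase.mpr ⟨hSeq, hSB⟩))
              hS₀3).mono hB'G
    · have hBB : B' = B := Finset.erase_eq_of_notMem hTM
      rw [hBB] at h2 hB'mem
      by_cases hc1 : (T \ M).card = 1
      · -- near-pendant case: M has full co-size 1
        have hBe : B = ∅ := Finset.card_eq_zero.mp (by omega)
        have hA'eq : A'.card = M.card - 2 := by omega
        have ihA := ih M (by omega) A' (hG.mono hA'G) hA'mem hA'eq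
        rcases Finset.mem_insert.mp hS₀ with hTeq | hSG
        · subst hTeq
          exact Or.inl ⟨M, hM, hMT, by omega⟩
        · rcases hsplit S₀ hSG with rfl | hSA' | hSB
          · exact (ihA S₀ (Finset.mem_insert_self _ _) hS₀3).mono hA'G
          · exact (ihA S₀ (Finset.mem_insert_of_mem hSA') hS₀3).mono hA'G
          · rw [hBe] at hSB; simp at hSB
      · exfalso
        have hc0 : 1 ≤ (T \ M).card := by
          have : (T \ M).Nonempty := by
            rw [Finset.sdiff_nonempty]
            exact fun h => hMT.ne (Finset.Subset.antisymm hMT.subset h)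
          exact Finset.card_pos.mpr this
        omega

/-- Conversely, the bifurcation condition forces the maximal cardinality. -/
lemma card_eq_of_cond : ∀ n : ℕ, ∀ T : Finset α, T.card ≤ n →
    ∀ G : Finset (Finset α), Laminar G → (∀ S ∈ G, 2 ≤ S.card ∧ S ⊂ T) →
    (∀ S ∈ insert T G, 3 ≤ S.card → Cond G S) → G.card = T.card - 2 := by
  intro n
  induction n with
  | zero =>
    intro T hT G hG hmem hcond
    have : G = ∅ := by
      apply Finset.eq_empty_of_forall_notMem
      intro S hS
      have h := Finset.card_lt_card (hmem S hS).2
      have := (hmem S hS).1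
      omega
    simp [this]; omega
  | succ n ih =>
    intro T hT G hG hmem hcond
    by_cases hT3 : 3 ≤ T.card
    case neg =>
      have : G = ∅ := by
        apply Finset.eq_empty_of_forall_notMem
        intro S hS
        have h := Finset.card_lt_card (hmem S hS).2
        have := (hmem S hS).1
        omega
      simp [this]; omega
    rcases hcond T (Finset.mem_insert_self T G) hT3 with ⟨S', hS', hsub, hcard⟩ |
      ⟨S', hS', S'', hS'', hsub', hsub'', huni⟩
    · -- case (a): a clade of co-size 1
      have hS'2 : 2 ≤ S'.card := (hmem S' hS').1
      have hall : ∀ M ∈ G, M ⊆ S' := by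
        intro M hM
        by_cases hMe : M = S'
        · exact hMe ▸ Finset.Subset.refl _
        rcases hG M hM S' hS' hMe with h | h | h
        · exact h.subset
        · exfalso
          have h1 := Finset.card_lt_card h
          have h2 := Finset.card_lt_card (hmem M hM).2
          omega
        · exfalso
          have hMsub : M ⊆ T \ S' := by
            intro x hx
            refine Finset.mem_sdiff.mpr ⟨(hmem M hM).2.subset hx, fun hxS => ?_⟩
            have : x ∈ M ∩ S' := Finset.mem_inter.mpr ⟨hx, hxS⟩
            simp [h] at this
          have h1 := Finset.card_le_card hMsub
          have h2 : (T \ S').card + S'.card = T.card :=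
            Finset.card_sdiff_add_card_eq_card hsub.subset
          have := (hmem M hM).1
          omega
      set G' := G.erase S' with hG'def
      have hG'G : G' ⊆ G := G.erase_subset S'
      have hG'mem : ∀ S ∈ G', 2 ≤ S.card ∧ S ⊂ S' := by
        intro S hS
        obtain ⟨hne, hSG⟩ := Finset.mem_erase.mp hS
        exact ⟨(hmem S hSG).1, Finset.ssubset_iff_subset_ne.mpr ⟨hall S hSG, hne⟩⟩
      have hcond' : ∀ S ∈ insert S' G', 3 ≤ S.card → Cond G' S := by
        intro S hS hS3
        have hSsub : S ⊆ S' := by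
          rcases Finset.mem_insert.mp hS with rfl | h
          · exact Finset.Subset.refl _
          · exact (hG'mem S h).2.subset
        have hSmem : S ∈ insert T G := by
          rcases Finset.mem_insert.mp hS with rfl | h
          · exact Finset.mem_insert_of_mem hS'
          · exact Finset.mem_insert_of_mem (hG'G h)
        have hW : ∀ W ∈ G, W ⊂ S → W ∈ G' := by
          intro W hWG hWS
          refine Finset.mem_erase.mpr ⟨?_, hWG⟩
          have : W ⊂ S' := lt_of_lt_of_le hWS hSsub
          exact this.ne
        rcases hcond S hSmem hS3 with ⟨W, hWG, h1, h2⟩ | ⟨W, hWG, W2, hW2G, h1, h2, h3⟩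
        · exact Or.inl ⟨W, hW W hWG h1, h1, h2⟩
        · exact Or.inr ⟨W, hW W hWG h1, W2, hW W2 hW2G h2, h1, h2, h3⟩
      have hS'c : S'.card < T.card := Finset.card_lt_card hsub
      have := ih S' (by omega) G' (hG.mono hG'G) hG'mem hcond'
      have hGc : G'.card = G.card - 1 := Finset.card_erase_of_mem hS'
      have hGpos : 1 ≤ G.card := Finset.card_pos.mpr ⟨S', hS'⟩
      omega
    · -- case (b): two clades partitioning T
      have hne : S' ≠ S'' := by
        rintro rfl
        rw [Finset.union_self] at huni
        exact hsub'.ne huni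
      have hdisj : S' ∩ S'' = ∅ := by
        rcases hG S' hS' S'' hS'' hne with h | h | h
        · exfalso
          have : S' ∪ S'' = S'' := Finset.union_eq_right.mpr h.subset
          rw [this] at huni
          exact hsub''.ne huni
        · exfalso
          have : S' ∪ S'' = S' := Finset.union_eq_left.mpr h.subset
          rw [this] at huni
          exact hsub'.ne huni
        · exact h
      have hcompl : ∀ x, x ∈ T → x ∉ S' → x ∈ S'' := by
        intro x hxT hxS'
        have : x ∈ S' ∪ S'' := huni ▸ hxT
        rcases Finset.mem_union.mp this with h | h
        · exact absurd h hxS'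
        · exact h
      have hcompl' : ∀ x, x ∈ T → x ∉ S'' → x ∈ S' := by
        intro x hxT hxS''
        have : x ∈ S' ∪ S'' := huni ▸ hxT
        rcases Finset.mem_union.mp this with h | h
        · exact h
        · exact absurd h hxS''
      have hnotin : ∀ x, x ∈ S' → x ∉ S'' := by
        intro x hx hx'
        have : x ∈ S' ∩ S'' := Finset.mem_inter.mpr ⟨hx, hx'⟩
        simp [hdisj] at this
      have hall : ∀ M ∈ G, M ⊆ S' ∨ M ⊆ S'' := by
        intro M hM
        by_cases hM1 : M ⊆ S'
        · exact Or.inl hM1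
        by_cases hM2 : M ⊆ S''
        · exact Or.inr hM2
        exfalso
        have hMne1 : M ≠ S' := fun h => hM1 (h ▸ Finset.Subset.refl _)
        have hMne2 : M ≠ S'' := fun h => hM2 (h ▸ Finset.Subset.refl _)
        have hMS' : S' ⊂ M := by
          rcases hG M hM S' hS' hMne1 with h | h | h
          · exact absurd h.subset hM1
          · exact h
          · exfalso
            apply hM2
            intro x hx
            refine hcompl x ((hmem M hM).2.subset hx) (fun hxS => ?_)
            have : x ∈ M ∩ S' := Finset.mem_inter.mpr ⟨hx, hxS⟩
            simp [h] at this
        have hMS'' : S'' ⊂ M := by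
          rcases hG M hM S'' hS'' hMne2 with h | h | h
          · exact absurd h.subset hM2
          · exact h
          · exfalso
            apply hM1
            intro x hx
            refine hcompl' x ((hmem M hM).2.subset hx) (fun hxS => ?_)
            have : x ∈ M ∩ S'' := Finset.mem_inter.mpr ⟨hx, hxS⟩
            simp [h] at this
        have : T ⊆ M := by
          rw [← huni]
          exact Finset.union_subset hMS'.subset hMS''.subset
        exact (hmem M hM).2.ne (Finset.Subset.antisymm (hmem M hM).2.subset this)
      set G₁ := G.filter (fun S => S ⊆ S') with hG₁def
      set G₂ := G.filter (fun S => ¬ S ⊆ S') with hG₂def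
      have hcc : G₁.card + G₂.card = G.card := Finset.card_filter_add_card_filter_not _
      have hS'G₁ : S' ∈ G₁ := Finset.mem_filter.mpr ⟨hS', Finset.Subset.refl _⟩
      have hS''G₂ : S'' ∈ G₂ := by
        refine Finset.mem_filter.mpr ⟨hS'', fun h => ?_⟩
        obtain ⟨x, hx⟩ := Finset.card_pos.mp (by have := (hmem S'' hS'').1; omega : 0 < S''.card)
        exact hnotin x (h hx) hx
      set G₁' := G₁.erase S' with hG₁'def
      set G₂' := G₂.erase S'' with hG₂'def
      have hG₁'G : G₁' ⊆ G := (G₁.erase_subset _).trans (Finset.filter_subset _ G)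
      have hG₂'G : G₂' ⊆ G := (G₂.erase_subset _).trans (Finset.filter_subset _ G)
      have hmem₁ : ∀ S ∈ G₁', 2 ≤ S.card ∧ S ⊂ S' := by
        intro S hS
        obtain ⟨hne', hSG⟩ := Finset.mem_erase.mp hS
        obtain ⟨hSG', hsub0⟩ := Finset.mem_filter.mp hSG
        exact ⟨(hmem S hSG').1, Finset.ssubset_iff_subset_ne.mpr ⟨hsub0, hne'⟩⟩
      have hmem₂ : ∀ S ∈ G₂', 2 ≤ S.card ∧ S ⊂ S'' := by
        intro S hS
        obtain ⟨hne', hSG⟩ := Finset.mem_erase.mp hS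
        obtain ⟨hSG', hsub0⟩ := Finset.mem_filter.mp hSG
        have : S ⊆ S'' := (hall S hSG').resolve_left hsub0
        exact ⟨(hmem S hSG').1, Finset.ssubset_iff_subset_ne.mpr ⟨this, hne'⟩⟩
      have hcond₁ : ∀ S ∈ insert S' G₁', 3 ≤ S.card → Cond G₁' S := by
        intro S hS hS3
        have hSsub : S ⊆ S' := by
          rcases Finset.mem_insert.mp hS with rfl | h
          · exact Finset.Subset.refl _
          · exact (hmem₁ S h).2.subset
        have hSmem : S ∈ insert T G := by
          rcases Finset.mem_insert.mp hS with rfl | h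
          · exact Finset.mem_insert_of_mem hS'
          · exact Finset.mem_insert_of_mem (hG₁'G h)
        have hW : ∀ W ∈ G, W ⊂ S → W ∈ G₁' := by
          intro W hWG hWS
          have hWS' : W ⊂ S' := lt_of_lt_of_le hWS hSsub
          exact Finset.mem_erase.mpr ⟨hWS'.ne, Finset.mem_filter.mpr ⟨hWG, hWS'.subset⟩⟩
        rcases hcond S hSmem hS3 with ⟨W, hWG, h1, h2⟩ | ⟨W, hWG, W2, hW2G, h1, h2, h3⟩
        · exact Or.inl ⟨W, hW W hWG h1, h1, h2⟩
        · exact Or.inr ⟨W, hW W hWG h1, W2, hW W2 hW2G h2, h1, h2, h3⟩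
      have hcond₂ : ∀ S ∈ insert S'' G₂', 3 ≤ S.card → Cond G₂' S := by
        intro S hS hS3
        have hSsub : S ⊆ S'' := by
          rcases Finset.mem_insert.mp hS with rfl | h
          · exact Finset.Subset.refl _
          · exact (hmem₂ S h).2.subset
        have hSmem : S ∈ insert T G := by
          rcases Finset.mem_insert.mp hS with rfl | h
          · exact Finset.mem_insert_of_mem hS''
          · exact Finset.mem_insert_of_mem (hG₂'G h)
        have hW : ∀ W ∈ G, W ⊂ S → W ∈ G₂' := by
          intro W hWG hWS
          have hWS'' : W ⊂ S'' := lt_of_lt_of_le hWS hSsub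
          have hWnS' : ¬ W ⊆ S' := by
            intro h
            obtain ⟨x, hx⟩ := Finset.card_pos.mp
              (by have := (hmem W hWG).1; omega : 0 < W.card)
            exact hnotin x (h hx) (hWS''.subset hx)
          exact Finset.mem_erase.mpr ⟨hWS''.ne, Finset.mem_filter.mpr ⟨hWG, hWnS'⟩⟩
        rcases hcond S hSmem hS3 with ⟨W, hWG, h1, h2⟩ | ⟨W, hWG, W2, hW2G, h1, h2, h3⟩
        · exact Or.inl ⟨W, hW W hWG h1, h1, h2⟩
        · exact Or.inr ⟨W, hW W hWG h1, W2, hW W2 hW2G h2, h1, h2, h3⟩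
      have hS'c : S'.card < T.card := Finset.card_lt_card hsub'
      have hS''c : S''.card < T.card := Finset.card_lt_card hsub''
      have ih₁ := ih S' (by omega) G₁' (hG.mono hG₁'G) hmem₁ hcond₁
      have ih₂ := ih S'' (by omega) G₂' (hG.mono hG₂'G) hmem₂ hcond₂
      have hc₁ : G₁'.card = G₁.card - 1 := Finset.card_erase_of_mem hS'G₁
      have hc₂ : G₂'.card = G₂.card - 1 := Finset.card_erase_of_mem hS''G₂
      have hp₁ : 1 ≤ G₁.card := Finset.card_pos.mpr ⟨S', hS'G₁⟩
      have hp₂ : 1 ≤ G₂.card := Finset.card_pos.mpr ⟨S'', hS''G₂⟩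
      have hTcard : S'.card + S''.card = T.card := by
        rw [← huni]
        exact (Finset.card_union_of_disjoint
          (Finset.disjoint_iff_inter_eq_empty.mpr hdisj)).symm
      have h2' : 2 ≤ S'.card := (hmem S' hS').1
      have h2'' : 2 ≤ S''.card := (hmem S'' hS'').1
      omega

end Aux

theorem fullDimensional_iff_bifurcated {N : ℕ} (hN : 3 ≤ N)
    (F : Finset (Finset (Fin N))) (hF : IsTreeTopology F) :
    F.card = N - 2 ↔ Bifurcated F := by
  obtain ⟨hmem, hlam⟩ := hF
  have hU : (Finset.univ : Finset (Fin N)).card = N := by simp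
  have hmem' : ∀ S ∈ F, 2 ≤ S.card ∧ S ⊂ Finset.univ := by
    intro S hS
    obtain ⟨h2, h1⟩ := hmem S hS
    refine ⟨h2, Finset.ssubset_univ_iff.mpr ?_⟩
    intro h
    rw [h, hU] at h1
    omega
  constructor
  · intro h
    have hc : ∀ S ∈ insert Finset.univ F, 3 ≤ S.card → Cond F S :=
      cond_of_card_eq N Finset.univ (le_of_eq hU) F hlam hmem' (by rw [hU]; exact h)
    intro S hS
    rcases Finset.mem_insert.mp hS with rfl | hSf
    · exact hc _ (Finset.mem_insert_self _ _) (by rw [hU]; exact hN)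
    · obtain ⟨hSF, hS3⟩ := Finset.mem_filter.mp hSf
      exact hc S (Finset.mem_insert_of_mem hSF) hS3
  · intro h
    have hc : ∀ S ∈ insert Finset.univ F, 3 ≤ S.card → Cond F S := by
      intro S hS h3
      rcases Finset.mem_insert.mp hS with rfl | hSF
      · exact h _ (Finset.mem_insert_self _ _)
      · exact h S (Finset.mem_insert_of_mem (Finset.mem_filter.mpr ⟨hSF, h3⟩))
    have := card_eq_of_cond N Finset.univ (le_of_eq hU) F hlam hmem' hc
    rw [hU] at this
    exact this
end

section
/- Let F be a tree topology on a ground set S0 with |S0| = N ≥ 3, and suppose F has a unique maximal clade S_max (with respect to inclusion). If F is full dimensional (|F| = N − 2), then |S_max| = N − 1. -/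
private lemma laminar_bound {α : Type*} [DecidableEq α] :
    ∀ (n : ℕ) (F : Finset (Finset α)) (U : Finset α), F.card = n →
      (∀ S ∈ F, S ⊆ U) → (∀ S ∈ F, 2 ≤ S.card) →
      (∀ S₁ ∈ F, ∀ S₂ ∈ F, S₁ ≠ S₂ → S₁ ⊆ S₂ ∨ S₂ ⊆ S₁ ∨ S₁ ∩ S₂ = ∅) →
      F.card ≤ U.card - 1 := by
  intro n
  induction n using Nat.strong_induction_on with
  | _ n ih =>
    intro F U hn hsub h2 hnest
    rcases F.eq_empty_or_nonempty with rfl | hne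
    · simp
    obtain ⟨S, hS, hSmin⟩ := F.exists_min_image Finset.card hne
    have hS2 := h2 S hS
    have hSne : S.Nonempty := by rw [← Finset.card_pos]; omega
    obtain ⟨s, hs⟩ := hSne
    set E := S.erase s with hE
    have hEcard : E.card = S.card - 1 := Finset.card_erase_of_mem hs
    have hES : E ⊆ S := Finset.erase_subset _ _
    have hkey : ∀ T ∈ F.erase S, S ⊆ T ∨ T ∩ S = ∅ := by
      intro T hT
      have hTne := Finset.ne_of_mem_erase hT
      have hTF := Finset.mem_of_mem_erase hT
      rcases hnest T hTF S hS hTne with h | h | h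
      · exfalso
        have : T ⊂ S := ⟨h, fun h' => hTne (Finset.Subset.antisymm h h')⟩
        have := Finset.card_lt_card this
        have := hSmin T hTF
        omega
      · exact Or.inl h
      · exact Or.inr h
    have hdisj_sdiff : ∀ T ∈ F.erase S, T ∩ S = ∅ → T \ E = T := by
      intro T hT hd
      rw [Finset.sdiff_eq_self_iff_disjoint]
      exact Finset.disjoint_of_subset_right hES
        (Finset.disjoint_iff_inter_eq_empty.mpr hd)
    have hinj : Set.InjOn (fun T => T \ E) (F.erase S : Set (Finset α)) := by
      intro T1 h1 T2 h2' heq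
      simp only at heq
      have h1' := hkey T1 h1
      have h2'' := hkey T2 h2'
      have hsmem : ∀ T, S ⊆ T → s ∈ T \ E := by
        intro T hST
        exact Finset.mem_sdiff.mpr ⟨hST hs, Finset.notMem_erase s S⟩
      rcases h1' with hA | hA <;> rcases h2'' with hB | hB
      · have e1 : T1 \ E ∪ E = T1 := Finset.sdiff_union_of_subset (hES.trans hA)
        have e2 : T2 \ E ∪ E = T2 := Finset.sdiff_union_of_subset (hES.trans hB)
        rw [← e1, ← e2, heq]
      · exfalso
        have := hsmem T1 hA
        rw [heq, hdisj_sdiff T2 h2' hB] at this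
        have : s ∈ T2 ∩ S := Finset.mem_inter.mpr ⟨this, hs⟩
        rw [hB] at this; exact absurd this (Finset.notMem_empty s)
      · exfalso
        have := hsmem T2 hB
        rw [← heq, hdisj_sdiff T1 h1 hA] at this
        have : s ∈ T1 ∩ S := Finset.mem_inter.mpr ⟨this, hs⟩
        rw [hA] at this; exact absurd this (Finset.notMem_empty s)
      · rw [← hdisj_sdiff T1 h1 hA, ← hdisj_sdiff T2 h2' hB, heq]
    set F' := (F.erase S).image (fun T => T \ E) with hF'
    set U' := U \ E with hU'
    have hF'card : F'.card = F.card - 1 := by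
      rw [hF', Finset.card_image_of_injOn hinj, Finset.card_erase_of_mem hS]
    have hcard1 : 1 ≤ F.card := Finset.card_pos.mpr hne
    have hlt : F.card - 1 < n := by omega
    have hsub' : ∀ T ∈ F', T ⊆ U' := by
      intro T hT
      obtain ⟨T0, hT0, rfl⟩ := Finset.mem_image.mp hT
      exact Finset.sdiff_subset_sdiff (hsub T0 (Finset.mem_of_mem_erase hT0))
        (Finset.Subset.refl E)
    have h2' : ∀ T ∈ F', 2 ≤ T.card := by
      intro T hT
      obtain ⟨T0, hT0, rfl⟩ := Finset.mem_image.mp hT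
      rcases hkey T0 hT0 with h | h
      · have hssub : S ⊂ T0 := ⟨h, fun h' =>
          (Finset.ne_of_mem_erase hT0) (Finset.Subset.antisymm h' h)⟩
        have hclt := Finset.card_lt_card hssub
        rw [Finset.card_sdiff_of_subset (hES.trans h)]
        omega
      · rw [hdisj_sdiff T0 hT0 h]
        exact h2 T0 (Finset.mem_of_mem_erase hT0)
    have hnest' : ∀ A ∈ F', ∀ B ∈ F', A ≠ B → A ⊆ B ∨ B ⊆ A ∨ A ∩ B = ∅ := by
      intro A hA B hB hAB
      obtain ⟨T1, hT1, rfl⟩ := Finset.mem_image.mp hA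
      obtain ⟨T2, hT2, rfl⟩ := Finset.mem_image.mp hB
      have hT12 : T1 ≠ T2 := fun h => hAB (by rw [h])
      rcases hnest T1 (Finset.mem_of_mem_erase hT1) T2
          (Finset.mem_of_mem_erase hT2) hT12 with h | h | h
      · exact Or.inl (Finset.sdiff_subset_sdiff h (Finset.Subset.refl E))
      · exact Or.inr (Or.inl (Finset.sdiff_subset_sdiff h (Finset.Subset.refl E)))
      · refine Or.inr (Or.inr (Finset.subset_empty.mp ?_))
        intro x hx
        have hx' := Finset.mem_inter.mp hx
        have : x ∈ T1 ∩ T2 := Finset.mem_inter.mpr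
          ⟨(Finset.sdiff_subset) hx'.1, (Finset.sdiff_subset) hx'.2⟩
        rw [h] at this; exact this
    have hrec := ih (F.card - 1) hlt F' U' hF'card hsub' h2' hnest'
    have hEU : E ⊆ U := hES.trans (hsub S hS)
    have hU'card : U'.card = U.card - E.card := Finset.card_sdiff_of_subset hEU
    have hsU' : s ∈ U' := Finset.mem_sdiff.mpr ⟨hsub S hS hs, Finset.notMem_erase s S⟩
    have hU'pos : 1 ≤ U'.card := Finset.card_pos.mpr ⟨s, hsU'⟩
    have hSU : S.card ≤ U.card := Finset.card_le_card (hsub S hS)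
    omega

theorem unique_maximal_clade_card {α : Type*} [DecidableEq α]
    (S0 : Finset α) (hN : 3 ≤ S0.card)
    (F : Finset (Finset α))
    (hsub : ∀ S ∈ F, S ⊆ S0)
    (hcard : ∀ S ∈ F, 2 ≤ S.card ∧ S.card ≤ S0.card - 1)
    (hnest : ∀ S₁ ∈ F, ∀ S₂ ∈ F, S₁ ≠ S₂ →
      S₁ ⊂ S₂ ∨ S₂ ⊂ S₁ ∨ S₁ ∩ S₂ = ∅)
    (Smax : Finset α) (hmem : Smax ∈ F)
    (hmax : ∀ S ∈ F, ¬ Smax ⊂ S)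
    (huniq : ∀ S ∈ F, (∀ T ∈ F, ¬ S ⊂ T) → S = Smax)
    (hfull : F.card = S0.card - 2) :
    Smax.card = S0.card - 1 := by
  -- every clade is contained in Smax
  have hall : ∀ S ∈ F, S ⊆ Smax := by
    intro S hS
    set G := F.filter (fun T => S ⊆ T) with hG
    have hSG : S ∈ G := Finset.mem_filter.mpr ⟨hS, Finset.Subset.refl S⟩
    obtain ⟨T, hT, hTmax⟩ := G.exists_max_image Finset.card ⟨S, hSG⟩
    have hTF := (Finset.mem_filter.mp hT).1
    have hST := (Finset.mem_filter.mp hT).2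
    have hTm : ∀ T' ∈ F, ¬ T ⊂ T' := by
      intro T' hT' hss
      have hT'G : T' ∈ G := Finset.mem_filter.mpr ⟨hT', hST.trans hss.subset⟩
      have := hTmax T' hT'G
      have := Finset.card_lt_card hss
      omega
    have := huniq T hTF hTm
    rw [← this]; exact hST
  have hbound := laminar_bound F.card F Smax rfl hall
    (fun S hS => (hcard S hS).1)
    (fun S₁ h₁ S₂ h₂ hne => by
      rcases hnest S₁ h₁ S₂ h₂ hne with h | h | h
      · exact Or.inl h.subset
      · exact Or.inr (Or.inl h.subset)
      · exact Or.inr (Or.inr h))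
  have h2 := (hcard Smax hmem).1
  have hle := (hcard Smax hmem).2
  omega
end

section
/- Let F be a tree topology on [N] with exactly two maximal clades S1 and S2. If F is full dimensional (|F| = N − 2), then S1 and S2 are disjoint and S1 ∪ S2 = [N]. -/
/-!
Removing the ground set `S` (if present) from a laminar family of non-singleton subsets of `S`
leaves a forest whose maximal members are pairwise disjoint proper subsets of `S`; by induction
each of them, say `A`, carries at most `|A| - 1` members, so the forest has at most `|S| - 2`
members (at least two disjoint blocks, or one proper block). Hence such a family has at most
`|S| - 1` members. Applied below the two maximal clades this gives
`N - 2 = |F| ≤ (|S₁| - 1) + (|S₂| - 1)`, while disjointness of `S₁` and `S₂` gives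
`|S₁| + |S₂| ≤ N`, so `S₁ ∪ S₂` has all `N` elements.
-/

open Finset

variable {α : Type*} [DecidableEq α]

def IsLaminar (L : Finset (Finset α)) : Prop :=
  ∀ A ∈ L, ∀ B ∈ L, A ≠ B → A ⊂ B ∨ B ⊂ A ∨ A ∩ B = ∅

namespace IsLaminar

variable {L : Finset (Finset α)}

theorem mono {L' : Finset (Finset α)} (hL : IsLaminar L) (hL' : L' ⊆ L) : IsLaminar L' :=
  fun A hA B hB hAB => hL A (hL' hA) B (hL' hB) hAB

theorem disjoint_of_maximal (hL : IsLaminar L) {A B : Finset α}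
    (hA : Maximal (· ∈ L) A) (hB : Maximal (· ∈ L) B) (hAB : A ≠ B) : Disjoint A B := by
  rcases hL A hA.prop B hB.prop hAB with hlt | hgt | hinter
  · exact absurd hlt (hA.not_gt hB.prop)
  · exact absurd hgt (hB.not_gt hA.prop)
  · exact disjoint_iff_inter_eq_empty.2 hinter

end IsLaminar

theorem card_le_sum_card_filter_subset {L M : Finset (Finset α)}
    (hcover : ∀ B ∈ L, ∃ A ∈ M, B ⊆ A) :
    L.card ≤ ∑ A ∈ M, (L.filter (· ⊆ A)).card :=
  calc L.card ≤ (M.biUnion fun A => L.filter (· ⊆ A)).card := card_le_card fun B hB => by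
          obtain ⟨A, hA, hBA⟩ := hcover B hB
          exact mem_biUnion.2 ⟨A, hA, mem_filter.2 ⟨hB, hBA⟩⟩
    _ ≤ ∑ A ∈ M, (L.filter (· ⊆ A)).card := card_biUnion_le

theorem sum_card_sub_one_le_card_sub_two {M : Finset (Finset α)} {S : Finset α}
    (hdisj : (M : Set (Finset α)).PairwiseDisjoint id) (hne : ∀ A ∈ M, A.Nonempty)
    (hsub : ∀ A ∈ M, A ⊂ S) :
    ∑ A ∈ M, (A.card - 1) ≤ S.card - 2 := by
  have hsum : ∑ A ∈ M, (A.card - 1) + M.card ≤ S.card :=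
    calc ∑ A ∈ M, (A.card - 1) + M.card = ∑ A ∈ M, A.card := by
          rw [card_eq_sum_ones, ← sum_add_distrib]
          exact sum_congr rfl fun A hA => Nat.sub_add_cancel (hne A hA).card_pos
      _ = (M.biUnion id).card := (card_biUnion hdisj).symm
      _ ≤ S.card := card_le_card (biUnion_subset.2 fun A hA => (hsub A hA).subset)
  rcases Nat.lt_or_ge M.card 2 with hM | hM
  · obtain ⟨A, hMA⟩ := card_le_one_iff_subset_singleton.1 (Nat.lt_succ_iff.1 hM)
    rcases subset_singleton_iff.1 hMA with rfl | rfl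
    · simp
    · have := card_lt_card (hsub A (mem_singleton_self A))
      rw [sum_singleton]
      omega
  · omega

theorem IsLaminar.card_le_card_sub_one {S : Finset α} {L : Finset (Finset α)} (hL : IsLaminar L)
    (hcard : ∀ A ∈ L, 2 ≤ A.card) (hsub : ∀ A ∈ L, A ⊆ S) : L.card ≤ S.card - 1 := by
  classical
  induction S using Finset.strongInduction generalizing L with
  | H S ih =>
    set L' := L.erase S
    have hL' : ∀ A ∈ L', A ⊂ S := fun A hA =>
      ssubset_of_ne_of_subset (ne_of_mem_erase hA) (hsub A (mem_of_mem_erase hA))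
    have hL'lam : IsLaminar L' := hL.mono (erase_subset _ _)
    set M := L'.filter (Maximal (· ∈ L'))
    have hM : ∀ A ∈ M, Maximal (· ∈ L') A := fun A hA => (mem_filter.1 hA).2
    have hcover : ∀ B ∈ L', ∃ A ∈ M, B ⊆ A := fun B hB => by
      obtain ⟨A, hBA, hA⟩ := L'.exists_le_maximal hB
      exact ⟨A, mem_filter.2 ⟨hA.prop, hA⟩, hBA⟩
    have hpiece : ∀ A ∈ M, (L'.filter (· ⊆ A)).card ≤ A.card - 1 := fun A hA =>
      ih A (hL' A (hM A hA).prop) (hL'lam.mono (filter_subset _ _))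
        (fun B hB => hcard B (mem_of_mem_erase (mem_filter.1 hB).1))
        (fun B hB => (mem_filter.1 hB).2)
    have hdisj : (M : Set (Finset α)).PairwiseDisjoint id := fun A hA B hB hAB =>
      hL'lam.disjoint_of_maximal (hM A hA) (hM B hB) hAB
    have hforest : L'.card ≤ S.card - 2 :=
      calc L'.card ≤ ∑ A ∈ M, (L'.filter (· ⊆ A)).card :=
          card_le_sum_card_filter_subset hcover
        _ ≤ ∑ A ∈ M, (A.card - 1) := sum_le_sum hpiece
        _ ≤ S.card - 2 := sum_card_sub_one_le_card_sub_two hdisj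
            (fun A hA =>
              card_pos.1 (zero_lt_two.trans_le (hcard A (mem_of_mem_erase (hM A hA).prop))))
            (fun A hA => hL' A (hM A hA).prop)
    by_cases hS : S ∈ L
    · have hL'card : L'.card = L.card - 1 := card_erase_of_mem hS
      have := hcard S hS
      omega
    · have hL'eq : L' = L := erase_eq_of_notMem hS
      rw [hL'eq] at hforest
      omega

theorem two_maximal_clades {N : ℕ}
    (F : Finset (Finset (Fin N)))
    (hcard : ∀ S ∈ F, 2 ≤ S.card ∧ S.card ≤ N - 1)
    (hnest : ∀ S₁ ∈ F, ∀ S₂ ∈ F, S₁ ≠ S₂ →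
      S₁ ⊂ S₂ ∨ S₂ ⊂ S₁ ∨ S₁ ∩ S₂ = ∅)
    (S₁ S₂ : Finset (Fin N)) (h₁ : S₁ ∈ F) (h₂ : S₂ ∈ F) (hne : S₁ ≠ S₂)
    (hmax₁ : ∀ T ∈ F, ¬ S₁ ⊂ T) (hmax₂ : ∀ T ∈ F, ¬ S₂ ⊂ T)
    (honly : ∀ S ∈ F, (∀ T ∈ F, ¬ S ⊂ T) → S = S₁ ∨ S = S₂)
    (hfull : F.card = N - 2) :
    S₁ ∩ S₂ = ∅ ∧ S₁ ∪ S₂ = Finset.univ := by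
  have hlam : IsLaminar F := hnest
  have hmaximal {S} (hS : S ∈ F) (h : ∀ T ∈ F, ¬ S ⊂ T) : Maximal (· ∈ F) S :=
    maximal_iff_forall_gt.2 ⟨hS, fun T hST hT => h T hT hST⟩
  have hdisj : Disjoint S₁ S₂ :=
    hlam.disjoint_of_maximal (hmaximal h₁ hmax₁) (hmaximal h₂ hmax₂) hne
  have hcover : ∀ S ∈ F, ∃ A ∈ ({S₁, S₂} : Finset _), S ⊆ A := fun S hS => by
    obtain ⟨A, hSA, hA⟩ := F.exists_le_maximal hS
    refine ⟨A, ?_, hSA⟩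
    rcases honly A hA.prop (fun T hT => hA.not_gt hT) with rfl | rfl <;> simp
  have hbelow (A : Finset (Fin N)) : (F.filter (· ⊆ A)).card ≤ A.card - 1 :=
    (hlam.mono (filter_subset _ _)).card_le_card_sub_one
      (fun B hB => (hcard B (mem_filter.1 hB).1).1) (fun B hB => (mem_filter.1 hB).2)
  have hF : F.card ≤ (S₁.card - 1) + (S₂.card - 1) :=
    calc F.card ≤ ∑ A ∈ {S₁, S₂}, (F.filter (· ⊆ A)).card :=
          card_le_sum_card_filter_subset hcover
      _ = (F.filter (· ⊆ S₁)).card + (F.filter (· ⊆ S₂)).card := sum_pair hne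
      _ ≤ (S₁.card - 1) + (S₂.card - 1) := add_le_add (hbelow S₁) (hbelow S₂)
  refine ⟨disjoint_iff_inter_eq_empty.1 hdisj, eq_univ_of_card _ ?_⟩
  have hunion := card_union_of_disjoint hdisj
  have hN := card_le_univ (S₁ ∪ S₂)
  rw [Fintype.card_fin] at hN ⊢
  have := (hcard S₁ h₁).1
  have := (hcard S₂ h₂).1
  omega
end

section
/- Let F1, F2, F be full-dimensional tree topologies on [N] and suppose F ∈ C(F1, F2), i.e., there exist ultrametrics w¹ ∈ ut(F1) and w² ∈ ut(F2) with their coordinatewise maximum w in ut(F). Then for each clade S in F̄ = {S ∈ F : |S| ≥ 3} ∪ {[N]}, either there exists S1 ∈ F1 ∪ {[N]} such that cl_{F1}(p) = S1 for every pair p with cl_F(p) = S, or there exists S2 ∈ F2 ∪ {[N]} such that cl_{F2}(p) = S2 for every pair p with cl_F(p) = S. -/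
/-- Membership in `ut(F)`: a symmetric ultrametric whose coordinates are
ordered according to the closures of pairs in the tree topology `F`. -/
def memUT {N : ℕ} (F : Finset (Finset (Fin N))) (w : Fin N → Fin N → ℝ) :
    Prop :=
  (∀ i j, w i j = w j i) ∧ IsUltrametricVec w ∧
  (∀ i j k l : Fin N, i ≠ j → k ≠ l →
    (cl F {i, j} = cl F {k, l} → w i j = w k l) ∧
    (cl F {i, j} ⊂ cl F {k, l} → w i j < w k l))

/-!
Write `W = w¹ ⊞ w²`. All pairs `p` with `cl_F(p) = S` carry the same value of `W`, and the other
pairs inside `S` carry smaller values. If an ultrametric `u ≤ W` attains `W` on one such pair, it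
attains it on all of them: for two such pairs `{i, m}`, `{m, k}` sharing a point, the third side
`{i, k}` has closure strictly inside `S` because a full-dimensional tree topology is binary, so the
three-point condition forces `u m k = W m k`; and any two such pairs are linked by at most two of
these steps. Hence `w¹` or `w²` attains `W` on all of these pairs. Wherever `u ∈ ut(G)` attains `W`,
the closure in `G` contains the closure in `F`, so the closure in `G` is the same for all of them.

Binarity comes from counting: sending each clade `T` of `F ∪ {[N]}` to the least element that `F`
separates from `min T` at `T` is injective and misses `min [N]`. At a node with three branches it
also misses the least element of the third branch, so `|F| ≤ N - 3`.
-/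

open Finset

variable {N : ℕ} {F G : Finset (Finset (Fin N))} {S T T' p q : Finset (Fin N)}
  {a b c i j k l m t x y z : Fin N} {u W : Fin N → Fin N → ℝ}

theorem IsTreeTopology.subset_or_subset_of_mem (hF : IsTreeTopology F) (hT : T ∈ insert univ F)
    (hT' : T' ∈ insert univ F) (hx : x ∈ T) (hx' : x ∈ T') : T ⊆ T' ∨ T' ⊆ T := by
  rcases mem_insert.mp hT with rfl | hT
  · exact Or.inr (subset_univ _)
  rcases mem_insert.mp hT' with rfl | hT'
  · exact Or.inl (subset_univ _)
  rcases eq_or_ne T T' with rfl | hne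
  · exact Or.inl subset_rfl
  rcases hF.2 T hT T' hT' hne with h | h | h
  · exact Or.inl h.subset
  · exact Or.inr h.subset
  · exact absurd (h ▸ mem_inter.mpr ⟨hx, hx'⟩) (notMem_empty x)

theorem subset_cl (p : Finset (Fin N)) : p ⊆ cl F p :=
  Finset.le_inf fun _ hS => (mem_filter.mp hS).2

theorem cl_subset (hT : T ∈ insert univ F) (h : p ⊆ T) : cl F p ⊆ T :=
  inf_le (f := id) (mem_filter.mpr ⟨hT, h⟩)

theorem cl_subset_cl (h : p ⊆ cl F q) : cl F p ⊆ cl F q :=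
  Finset.le_inf fun _ hS =>
    have hS := mem_filter.mp hS
    cl_subset hS.1 (h.trans (cl_subset hS.1 hS.2))

theorem IsTreeTopology.cl_mem (hF : IsTreeTopology F) (hp : p.Nonempty) :
    cl F p ∈ insert univ F := by
  obtain ⟨x, hx⟩ := hp
  -- the clades containing `x` form a chain, so they are closed under intersection
  have : cl F p ∈ {T | T ∈ insert univ F ∧ x ∈ T} := by
    refine Finset.inf_mem _ (by simp) (fun T hT T' hT' => ?_) _ _
      fun T hT => ⟨(mem_filter.mp hT).1, (mem_filter.mp hT).2 hx⟩
    rcases hF.subset_or_subset_of_mem hT.1 hT'.1 hT.2 hT'.2 with h | h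
    · rwa [inf_eq_left.mpr h]
    · rwa [inf_eq_right.mpr h]
  exact this.1

theorem IsTreeTopology.cl_pair_mem (hF : IsTreeTopology F) : cl F {i, j} ∈ insert univ F :=
  hF.cl_mem (insert_nonempty _ _)

theorem left_mem_cl : i ∈ cl F {i, j} :=
  subset_cl _ (mem_insert_self i _)

theorem right_mem_cl : j ∈ cl F {i, j} :=
  subset_cl _ (mem_insert_of_mem (mem_singleton_self j))

theorem cl_pair_subset (hT : T ∈ insert univ F) (hi : i ∈ T) (hj : j ∈ T) : cl F {i, j} ⊆ T :=
  cl_subset hT (insert_subset hi (singleton_subset_iff.mpr hj))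

theorem cl_pair_subset_cl (hi : i ∈ cl F p) (hj : j ∈ cl F p) : cl F {i, j} ⊆ cl F p :=
  cl_subset_cl (insert_subset hi (singleton_subset_iff.mpr hj))

theorem IsTreeTopology.cl_pair_ne_of_ne (hF : IsTreeTopology F) (hT : T ∈ insert univ F)
    (hx : x ∈ T) (hy : y ∈ T) (hz : z ∈ T) (hxy : cl F {x, y} ≠ T) (hyz : cl F {y, z} ≠ T) :
    cl F {x, z} ≠ T := by
  intro hxz
  have key : ∀ {q}, cl F q ⊆ T → cl F q ≠ T → x ∈ cl F q → z ∈ cl F q → False :=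
    fun hqT hq hxq hzq => hq (subset_antisymm hqT (hxz ▸ cl_pair_subset_cl hxq hzq))
  rcases hF.subset_or_subset_of_mem hF.cl_pair_mem hF.cl_pair_mem (right_mem_cl (i := x))
      (left_mem_cl (j := z)) with h | h
  · exact key (cl_pair_subset hT hy hz) hyz (h left_mem_cl) right_mem_cl
  · exact key (cl_pair_subset hT hx hy) hxy left_mem_cl (h right_mem_cl)

theorem IsTreeTopology.exists_ne_cl_pair_eq (hF : IsTreeTopology F) (hT : T ∈ insert univ F)
    (hm : m ∈ T) (hT₂ : T.Nontrivial) : ∃ t, m ≠ t ∧ cl F {m, t} = T := by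
  -- the closures `cl {m, s}` form a chain; the largest one contains all of `T`
  obtain ⟨t, ht, hmax⟩ :=
    (T.erase m).exists_max_image (fun s => (cl F {m, s}).card) hT₂.erase_nonempty
  refine ⟨t, (ne_of_mem_erase ht).symm,
    subset_antisymm (cl_pair_subset hT hm (mem_of_mem_erase ht)) fun s hs => ?_⟩
  rcases eq_or_ne s m with rfl | hsm
  · exact left_mem_cl
  rcases hF.subset_or_subset_of_mem hF.cl_pair_mem hF.cl_pair_mem (left_mem_cl (j := s))
      (left_mem_cl (j := t)) with h | h
  · exact h right_mem_cl
  · rw [eq_of_subset_of_card_le h (hmax s (mem_erase.mpr ⟨hsm, hs⟩))]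
    exact right_mem_cl

/-- `t` is the least element that `F` separates from `min T` at the clade `T`. -/
def IsFirstSplit (F : Finset (Finset (Fin N))) (T : Finset (Fin N)) (t : Fin N) : Prop :=
  ∃ m ∈ T, (∀ s ∈ T, m ≤ s) ∧ m ≠ t ∧ cl F {m, t} = T ∧
    ∀ s, m ≠ s → cl F {m, s} = T → t ≤ s

theorem IsFirstSplit.mem (h : IsFirstSplit F T t) : t ∈ T := by
  obtain ⟨m, -, -, -, hcl, -⟩ := h
  exact hcl ▸ right_mem_cl

theorem IsFirstSplit.exists_lt (h : IsFirstSplit F T t) : ∃ m, m < t := by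
  have ht := h.mem
  obtain ⟨m, -, hmin, hmt, -, -⟩ := h
  exact ⟨m, lt_of_le_of_ne (hmin t ht) hmt⟩

theorem IsTreeTopology.exists_isFirstSplit (hF : IsTreeTopology F) (hT : T ∈ insert univ F)
    (hT₂ : T.Nontrivial) : ∃ t, IsFirstSplit F T t := by
  set m := T.min' hT₂.nonempty
  have hm : m ∈ T := T.min'_mem hT₂.nonempty
  obtain ⟨t₀, ht₀⟩ := hF.exists_ne_cl_pair_eq hT hm hT₂
  obtain ⟨t, ht, hleast⟩ := (T.filter fun s => m ≠ s ∧ cl F {m, s} = T).exists_min_image id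
    ⟨t₀, mem_filter.mpr ⟨ht₀.2 ▸ right_mem_cl, ht₀⟩⟩
  obtain ⟨-, hmt, hcl⟩ := mem_filter.mp ht
  exact ⟨t, m, hm, fun s hs => T.min'_le s hs, hmt, hcl,
    fun s hms hcl' => hleast s (mem_filter.mpr ⟨hcl' ▸ right_mem_cl, hms, hcl'⟩)⟩

theorem IsTreeTopology.eq_of_isFirstSplit_of_subset (hF : IsTreeTopology F)
    (hT' : T' ∈ insert univ F) (h : IsFirstSplit F T t) (h' : IsFirstSplit F T' t)
    (hsub : T ⊆ T') : T = T' := by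
  obtain ⟨m, hm, hmin, hmt, hcl, -⟩ := h
  obtain ⟨m', -, -, -, hcl', hleast'⟩ := h'
  have htT : t ∈ T := hcl ▸ right_mem_cl
  by_contra hne
  have hm' : m' ∉ T := fun hm' =>
    hne (subset_antisymm hsub (hcl' ▸ hcl ▸ cl_pair_subset_cl (hcl ▸ hm') (hcl ▸ htT)))
  have hm'm : cl F {m', m} = T' := by
    by_contra hm'm
    exact hF.cl_pair_ne_of_ne hT' (hcl' ▸ left_mem_cl) (hsub hm) (hsub htT) hm'm
      (hcl ▸ hne) hcl'
  exact hmt (le_antisymm (hmin t htT) (hleast' m (ne_of_mem_of_not_mem hm hm').symm hm'm))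

theorem IsTreeTopology.eq_of_isFirstSplit (hF : IsTreeTopology F) (hT : T ∈ insert univ F)
    (hT' : T' ∈ insert univ F) (h : IsFirstSplit F T t) (h' : IsFirstSplit F T' t) : T = T' := by
  rcases hF.subset_or_subset_of_mem hT hT' h.mem h'.mem with hsub | hsub
  · exact hF.eq_of_isFirstSplit_of_subset hT' h h' hsub
  · exact (hF.eq_of_isFirstSplit_of_subset hT h' h hsub).symm

theorem IsTreeTopology.exists_third_branch (hF : IsTreeTopology F) (hT : T ∈ insert univ F)
    (ha : a ∈ T) (hb : b ∈ T) (hxy : x ≠ y) (hxz : x ≠ z) (hyz : y ≠ z)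
    (hcxy : cl F {x, y} = T) (hcxz : cl F {x, z} = T) (hcyz : cl F {y, z} = T) :
    ∃ c, a ≠ c ∧ b ≠ c ∧ cl F {a, c} = T ∧ cl F {b, c} = T := by
  have hxT : x ∈ T := hcxy ▸ left_mem_cl
  have hyT : y ∈ T := hcxy ▸ right_mem_cl
  have hzT : z ∈ T := hcxz ▸ right_mem_cl
  have split : ∀ d ∈ T, ∀ s ∈ T, ∀ s' ∈ T, s ≠ s' → cl F {s, s'} = T →
      (d ≠ s ∧ cl F {d, s} = T) ∨ (d ≠ s' ∧ cl F {d, s'} = T) := by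
    intro d hd s hs s' hs' hss' hcl
    by_contra! h
    rcases eq_or_ne d s with rfl | hds
    · exact h.2 hss' hcl
    rcases eq_or_ne d s' with rfl | hds'
    · exact h.1 hss'.symm (pair_comm d s ▸ hcl)
    exact hF.cl_pair_ne_of_ne hT hs hd hs' (pair_comm d s ▸ h.1 hds) (h.2 hds') hcl
  have pigeonhole : ∀ {Ax Ay Az Bx By Bz : Prop}, (Ax ∨ Ay) → (Ax ∨ Az) → (Ay ∨ Az) →
      (Bx ∨ By) → (Bx ∨ Bz) → (By ∨ Bz) → (Ax ∧ Bx) ∨ (Ay ∧ By) ∨ (Az ∧ Bz) := by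
    tauto
  rcases pigeonhole (split a ha x hxT y hyT hxy hcxy) (split a ha x hxT z hzT hxz hcxz)
      (split a ha y hyT z hzT hyz hcyz) (split b hb x hxT y hyT hxy hcxy)
      (split b hb x hxT z hzT hxz hcxz) (split b hb y hyT z hzT hyz hcyz) with
    ⟨⟨hac, hacl⟩, hbc, hbcl⟩ | ⟨⟨hac, hacl⟩, hbc, hbcl⟩ | ⟨⟨hac, hacl⟩, hbc, hbcl⟩ <;>
  exact ⟨_, hac, hbc, hacl, hbcl⟩

theorem IsTreeTopology.not_isFirstSplit_of_third_branch (hF : IsTreeTopology F)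
    (hS : S ∈ insert univ F) (ha : a ∈ S) (hamin : ∀ s ∈ S, a ≤ s) (hb : IsFirstSplit F S b)
    (hc : a ≠ c ∧ b ≠ c ∧ cl F {a, c} = S ∧ cl F {b, c} = S)
    (hcmin : ∀ s, a ≠ s → b ≠ s → cl F {a, s} = S → cl F {b, s} = S → c ≤ s)
    (hT : T ∈ insert univ F) : ¬ IsFirstSplit F T c := by
  obtain ⟨hac, hbc, hacl, hbcl⟩ := hc
  rintro ⟨m, hm, hmmin, hmc, hcl, hleast⟩
  have hcS : c ∈ S := hacl ▸ right_mem_cl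
  have hcT : c ∈ T := hcl ▸ right_mem_cl
  rcases eq_or_ne T S with rfl | hne
  · obtain ⟨m', hm', hm'min, hm'b, hm'bcl, hleastb⟩ := hb
    obtain rfl : m = a := le_antisymm (hmmin a ha) (hamin m hm)
    obtain rfl : m' = m := le_antisymm (hm'min m hm) (hmmin m' hm')
    exact hbc (le_antisymm (hleastb c hac hacl) (hleast b hm'b hm'bcl))
  rcases hF.subset_or_subset_of_mem hT hS hcT hcS with hsub | hsub
  · -- `T` is inside the branch of `c`, so `min T` lies in that branch too
    have branch : ∀ d ∈ S, cl F {d, c} = S → d ≠ m ∧ cl F {d, m} = S := fun d hd hdc =>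
      ⟨by rintro rfl; exact hne (hcl.symm.trans hdc),
        by_contra fun h => hF.cl_pair_ne_of_ne hS hd (hsub hm) hcS h (hcl ▸ hne) hdc⟩
    obtain ⟨ham, hamcl⟩ := branch a ha hacl
    obtain ⟨hbm, hbmcl⟩ := branch b hb.mem hbcl
    exact hmc (le_antisymm (hmmin c hcT) (hcmin m ham hbm hamcl hbmcl))
  · -- `S` is inside the branch of `c`, so `min S < c` competes with `c` at `T`
    have hma : m ≠ a := by rintro rfl; exact hne (hcl.symm.trans hacl)
    have hmacl : cl F {m, a} = T := by_contra fun h =>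
      hF.cl_pair_ne_of_ne hT hm (hsub ha) hcT h (hacl ▸ hne.symm) hcl
    exact hac (le_antisymm (hamin c hcS) (hleast a hma hmacl))

theorem IsTreeTopology.univ_notMem (hF : IsTreeTopology F) (hN : 0 < N) : univ ∉ F := fun h => by
  have := (hF.1 univ h).2
  rw [card_univ, Fintype.card_fin] at this
  omega

theorem IsTreeTopology.nontrivial_of_mem (hF : IsTreeTopology F) (hN : 1 < N)
    (hT : T ∈ insert univ F) : T.Nontrivial := by
  rcases mem_insert.mp hT with rfl | hT
  · exact one_lt_card_iff_nontrivial.mp (by rwa [card_univ, Fintype.card_fin])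
  · exact one_lt_card_iff_nontrivial.mp (hF.1 T hT).1

theorem IsTreeTopology.card_add_three_le (hF : IsTreeTopology F) (hxy : x ≠ y) (hxz : x ≠ z)
    (hyz : y ≠ z) (hcxz : cl F {x, y} = cl F {x, z}) (hcyz : cl F {x, y} = cl F {y, z}) :
    F.card + 3 ≤ N := by
  set S := cl F {x, y}
  have hS : S ∈ insert univ F := hF.cl_pair_mem
  have hN : 3 ≤ N := by
    simpa [card_insert_of_notMem, hxy, hxz, hyz] using card_le_univ {x, y, z}
  have : Nonempty (Fin N) := ⟨x⟩
  have hN₁ : 1 < N := by omega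
  have hφ : ∀ T ∈ insert univ F, ∃ t, IsFirstSplit F T t := fun T hT =>
    hF.exists_isFirstSplit hT (hF.nontrivial_of_mem hN₁ hT)
  choose! φ hφ using hφ
  obtain ⟨a, ha, hamin, -⟩ := hφ S hS
  obtain ⟨c₀, hc₀⟩ := hF.exists_third_branch hS ha (hφ S hS).mem hxy hxz hyz rfl hcxz.symm
    hcyz.symm
  obtain ⟨c, hc, hcmin⟩ :=
    (univ.filter fun s => a ≠ s ∧ φ S ≠ s ∧ cl F {a, s} = S ∧ cl F {φ S, s} = S).exists_min_image
      id ⟨c₀, mem_filter.mpr ⟨mem_univ _, hc₀⟩⟩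
  set a₀ := univ.min' ⟨x, mem_univ x⟩
  have hca₀ : c ≠ a₀ := by
    obtain ⟨hac, -, hacl, -⟩ := (mem_filter.mp hc).2
    exact (lt_of_le_of_lt (univ.min'_le a (mem_univ a))
      (lt_of_le_of_ne (hamin c (hacl ▸ right_mem_cl)) hac)).ne'
  have hmaps : Set.MapsTo φ ↑(insert univ F) ↑((univ.erase a₀).erase c) := by
    intro T (hT : T ∈ insert univ F)
    refine mem_erase.mpr ⟨fun h => ?_, mem_erase.mpr ⟨fun h => ?_, mem_univ _⟩⟩
    · refine hF.not_isFirstSplit_of_third_branch hS ha hamin (hφ S hS) (mem_filter.mp hc).2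
        (fun s h₁ h₂ h₃ h₄ => hcmin s (mem_filter.mpr ⟨mem_univ _, h₁, h₂, h₃, h₄⟩)) hT ?_
      exact h ▸ hφ T hT
    · obtain ⟨m, hm⟩ := (hφ T hT).exists_lt
      exact (lt_of_le_of_lt (univ.min'_le m (mem_univ m)) hm).ne' h
  have hcard := card_le_card_of_injOn φ hmaps fun T hT T' hT' h =>
    hF.eq_of_isFirstSplit hT hT' (hφ T hT) (h ▸ hφ T' hT')
  rw [card_insert_of_notMem (hF.univ_notMem (by omega)),
    card_erase_of_mem (mem_erase.mpr ⟨hca₀, mem_univ c⟩),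
    card_erase_of_mem (mem_univ _), card_univ, Fintype.card_fin] at hcard
  omega

theorem IsTreeTopology.cl_pair_ne_of_card_eq (hF : IsTreeTopology F) (hfull : F.card = N - 2)
    (hxy : x ≠ y) (hxz : x ≠ z) (hyz : y ≠ z) (h : cl F {x, y} = cl F {y, z}) :
    cl F {x, z} ≠ cl F {x, y} := fun h' => by
  have := hF.card_add_three_le hxy hxz hyz h'.symm h
  omega

theorem memUT.le_of_cl_subset (hW : memUT F W) (hij : i ≠ j) (hkl : k ≠ l)
    (h : cl F {i, j} ⊆ cl F {k, l}) : W i j ≤ W k l := by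
  rcases h.eq_or_ssubset with h | h
  · exact ((hW.2.2 i j k l hij hkl).1 h).le
  · exact ((hW.2.2 i j k l hij hkl).2 h).le

theorem memUT.mem_cl_of_le (hG : IsTreeTopology G) (hu : memUT G u) (hij : i ≠ j) (hik : i ≠ k)
    (h : u i k ≤ u i j) : k ∈ cl G {i, j} := by
  by_contra hk
  rcases hG.subset_or_subset_of_mem hG.cl_pair_mem hG.cl_pair_mem (left_mem_cl (j := j))
      (left_mem_cl (j := k)) with hsub | hsub
  · refine h.not_gt ((hu.2.2 i j i k hij hik).2 (hsub.ssubset_of_ne ?_))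
    exact fun he => hk (he ▸ right_mem_cl)
  · exact hk (hsub right_mem_cl)

theorem cl_subset_cl_of_apply_eq (hG : IsTreeTopology G) (hu : memUT G u) (hW : memUT F W)
    (hle : ∀ i j, u i j ≤ W i j) (hij : i ≠ j) (heq : u i j = W i j) :
    cl F {i, j} ⊆ cl G {i, j} := by
  intro k hk
  rcases eq_or_ne i k with rfl | hik
  · exact left_mem_cl
  refine hu.mem_cl_of_le hG hij hik ?_
  calc u i k ≤ W i k := hle i k
    _ ≤ W i j := hW.le_of_cl_subset hik hij (cl_pair_subset_cl left_mem_cl hk)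
    _ = u i j := heq.symm

theorem cl_eq_cl_of_apply_eq (hG : IsTreeTopology G) (hu : memUT G u) (hW : memUT F W)
    (hle : ∀ i j, u i j ≤ W i j) (hij : i ≠ j) (hkl : k ≠ l) (hcl : cl F {i, j} = cl F {k, l})
    (hij' : u i j = W i j) (hkl' : u k l = W k l) : cl G {i, j} = cl G {k, l} := by
  have hi := cl_subset_cl_of_apply_eq hG hu hW hle hij hij'
  have hk := cl_subset_cl_of_apply_eq hG hu hW hle hkl hkl'
  exact subset_antisymm (cl_pair_subset_cl (hk (hcl ▸ left_mem_cl)) (hk (hcl ▸ right_mem_cl)))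
    (cl_pair_subset_cl (hi (hcl ▸ left_mem_cl)) (hi (hcl ▸ right_mem_cl)))

theorem exists_cl_eq_of_forall_apply_eq (hG : IsTreeTopology G) (hu : memUT G u)
    (hW : memUT F W) (hle : ∀ i j, u i j ≤ W i j) (S : Finset (Fin N))
    (h : ∀ i j, i ≠ j → cl F {i, j} = S → u i j = W i j) :
    ∃ S' ∈ insert univ G, ∀ i j, i ≠ j → cl F {i, j} = S → cl G {i, j} = S' := by
  by_cases hS : ∃ i j, i ≠ j ∧ cl F {i, j} = S
  · obtain ⟨i₀, j₀, hij₀, hcl₀⟩ := hS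
    exact ⟨cl G {i₀, j₀}, hG.cl_pair_mem, fun i j hij hcl => cl_eq_cl_of_apply_eq hG hu hW hle
      hij hij₀ (hcl.trans hcl₀.symm) (h i j hij hcl) (h i₀ j₀ hij₀ hcl₀)⟩
  · push Not at hS
    exact ⟨univ, mem_insert_self _ _, fun i j hij hcl => absurd hcl (hS i j hij)⟩

theorem apply_eq_of_cl_eq_of_adjacent (hF : IsTreeTopology F) (hfull : F.card = N - 2)
    (hW : memUT F W) (hu_symm : ∀ i j, u i j = u j i) (hu : IsUltrametricVec u)
    (hle : ∀ i j, u i j ≤ W i j) (him : i ≠ m) (hmk : m ≠ k) (hcl : cl F {i, m} = cl F {m, k})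
    (heq : u i m = W i m) : u m k = W m k := by
  rcases eq_or_ne i k with rfl | hik
  · rw [hu_symm, heq, hW.1]
  have hlt : u i k < u i m := calc
    u i k ≤ W i k := hle i k
    _ < W i m := (hW.2.2 i k i m hik him).2 <|
      (cl_pair_subset_cl left_mem_cl (hcl ▸ right_mem_cl)).ssubset_of_ne
        (hF.cl_pair_ne_of_card_eq hfull him hik hmk hcl)
    _ = u i m := heq.symm
  rcases hu i m k him hik hmk with ⟨h, -⟩ | ⟨h, -⟩ | ⟨-, h⟩
  · exact absurd h hlt.ne'
  · rw [← h, heq, (hW.2.2 i m m k him hmk).1 hcl]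
  · exact absurd h hlt.not_ge

theorem apply_eq_of_cl_eq (hF : IsTreeTopology F) (hfull : F.card = N - 2) (hW : memUT F W)
    (hu_symm : ∀ i j, u i j = u j i) (hu : IsUltrametricVec u) (hle : ∀ i j, u i j ≤ W i j)
    (hij : i ≠ j) (hkl : k ≠ l) (hcl : cl F {i, j} = cl F {k, l}) (heq : u i j = W i j) :
    u k l = W k l := by
  have step : ∀ {a b c}, a ≠ b → b ≠ c → cl F {a, b} = cl F {b, c} → u a b = W a b →
      u b c = W b c :=
    apply_eq_of_cl_eq_of_adjacent hF hfull hW hu_symm hu hle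
  have hji : u j i = W j i := by rw [hu_symm, heq, hW.1]
  have hjicl : cl F {j, i} = cl F {i, j} := by rw [pair_comm]
  -- the pairs `{j, i}, {i, k}, {k, l}` link `{i, j}` to `{k, l}`
  have link : ∀ k l, k ≠ l → cl F {k, l} = cl F {i, j} → cl F {i, k} = cl F {i, j} →
      u k l = W k l := by
    intro k l hkl hkl' hik
    rcases eq_or_ne i k with rfl | hik'
    · exact step hij.symm hkl (hjicl.trans hkl'.symm) hji
    · exact step hik' hkl (hik.trans hkl'.symm) (step hij.symm hik' (hjicl.trans hik.symm) hji)
  by_cases hik : cl F {i, k} = cl F {i, j}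
  · exact link k l hkl hcl.symm hik
  have hil : cl F {i, l} = cl F {i, j} := by_contra fun hil =>
    hF.cl_pair_ne_of_ne hF.cl_pair_mem (hcl ▸ left_mem_cl) left_mem_cl (hcl ▸ right_mem_cl)
      (pair_comm k i ▸ hik) hil hcl.symm
  rw [hu_symm, hW.1]
  exact link l k hkl.symm (by rw [pair_comm, hcl]) hil

theorem compatible_topologies_general {N : ℕ}
    (F₁ F₂ F : Finset (Finset (Fin N)))
    (hF₁ : IsTreeTopology F₁) (hF₂ : IsTreeTopology F₂)
    (hF : IsTreeTopology F)
    (hfull : F.card = N - 2)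
    (w₁ w₂ : Fin N → Fin N → ℝ)
    (hw₁ : memUT F₁ w₁) (hw₂ : memUT F₂ w₂)
    (hw : memUT F (fun i j => max (w₁ i j) (w₂ i j))) :
    ∀ S ∈ Fbar F,
      (∃ S₁ ∈ insert Finset.univ F₁,
        ∀ i j : Fin N, i ≠ j → cl F {i, j} = S → cl F₁ {i, j} = S₁) ∨
      (∃ S₂ ∈ insert Finset.univ F₂,
        ∀ i j : Fin N, i ≠ j → cl F {i, j} = S → cl F₂ {i, j} = S₂) := by
  intro S _
  by_cases h₁ : ∀ i j, i ≠ j → cl F {i, j} = S → w₁ i j = max (w₁ i j) (w₂ i j)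
  · exact Or.inl (exists_cl_eq_of_forall_apply_eq hF₁ hw₁ hw (fun _ _ => le_max_left _ _) S h₁)
  push Not at h₁
  obtain ⟨k, l, hkl, hclk, hne⟩ := h₁
  refine Or.inr (exists_cl_eq_of_forall_apply_eq hF₂ hw₂ hw (fun _ _ => le_max_right _ _) S ?_)
  intro i j hij hcl
  rcases max_choice (w₁ i j) (w₂ i j) with h | h
  · exact absurd (apply_eq_of_cl_eq hF hfull hw hw₁.1 hw₁.2.1 (fun _ _ => le_max_left _ _) hij hkl
      (hcl.trans hclk.symm) h.symm) hne
  · exact h.symm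

theorem compatible_topologies {N : ℕ}
    (F₁ F₂ F : Finset (Finset (Fin N)))
    (hF₁ : IsTreeTopology F₁) (hF₂ : IsTreeTopology F₂)
    (hF : IsTreeTopology F)
    (hfull₁ : F₁.card = N - 2) (hfull₂ : F₂.card = N - 2)
    (hfull : F.card = N - 2)
    (w₁ w₂ : Fin N → Fin N → ℝ)
    (hw₁ : memUT F₁ w₁) (hw₂ : memUT F₂ w₂)
    (hw : memUT F (fun i j => max (w₁ i j) (w₂ i j))) :
    ∀ S ∈ Fbar F,
      (∃ S₁ ∈ insert Finset.univ F₁,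
        ∀ i j : Fin N, i ≠ j → cl F {i, j} = S → cl F₁ {i, j} = S₁) ∨
      (∃ S₂ ∈ insert Finset.univ F₂,
        ∀ i j : Fin N, i ≠ j → cl F {i, j} = S → cl F₂ {i, j} = S₂) :=
  compatible_topologies_general F₁ F₂ F hF₁ hF₂ hF hfull w₁ w₂ hw₁ hw₂ hw
end

section
/- For the 12-leaf full-dimensional tree topologies F1 = {{1,2,7,8,9,12},{1,7,9},{2,8,12},{1,7},{2,8},{3,4,5,6,10,11},{3,5,11},{4,6,10},{3,5},{4,6}}, F2 = {{1,2,3,4,9,10},{2,3,4,9,10},{2,3,4,10},{3,4,10},{3,10},{5,6,7,8,11,12},{5,7,12},{6,8,11},{5,7},{6,8}}, and F = {{1,2,3,4,9,10},{1,2,9},{3,4,10},{1,9},{3,10},{5,6,7,8,11,12},{5,6,11},{7,8,12},{5,11},{7,12}}, there do not exist ultrametrics w¹ ∈ ut(F1) and w² ∈ ut(F2) whose coordinatewise maximum lies in ut(F). -/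
/-- The tree topology `F₁` of Example 12 (leaf labels shifted down by one). -/
def F₁ex : Finset (Finset (Fin 12)) :=
  { {0, 1, 6, 7, 8, 11}, {0, 6, 8}, {1, 7, 11}, {0, 6}, {1, 7},
    {2, 3, 4, 5, 9, 10}, {2, 4, 10}, {3, 5, 9}, {2, 4}, {3, 5} }

/-- The tree topology `F₂` of Example 12 (leaf labels shifted down by one). -/
def F₂ex : Finset (Finset (Fin 12)) :=
  { {0, 1, 2, 3, 8, 9}, {1, 2, 3, 8, 9}, {1, 2, 3, 9}, {2, 3, 9}, {2, 9},
    {4, 5, 6, 7, 10, 11}, {4, 6, 11}, {5, 7, 10}, {4, 6}, {5, 7} }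

/-- The tree topology `F` of Example 12 (leaf labels shifted down by one). -/
def Fex : Finset (Finset (Fin 12)) :=
  { {0, 1, 2, 3, 8, 9}, {0, 1, 8}, {2, 3, 9}, {0, 8}, {2, 9},
    {4, 5, 6, 7, 10, 11}, {4, 5, 10}, {6, 7, 11}, {4, 10}, {6, 11} }

theorem example_not_compatible :
    ¬ ∃ w₁ w₂ : Fin 12 → Fin 12 → ℝ,
      memUT F₁ex w₁ ∧ memUT F₂ex w₂ ∧
      memUT Fex (fun i j => max (w₁ i j) (w₂ i j)) := by
  rintro ⟨w₁, w₂, ⟨-, -, h₁⟩, ⟨-, -, h₂⟩, ⟨-, -, h⟩⟩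
  -- Step 1: w₂ 0 1 < w₁ 0 1
  have s1a : max (w₁ 0 8) (w₂ 0 8) < max (w₁ 0 1) (w₂ 0 1) :=
    (h 0 8 0 1 (by decide) (by decide)).2 (by decide)
  have s1b : w₂ 0 1 = w₂ 0 8 := (h₂ 0 1 0 8 (by decide) (by decide)).1 (by decide)
  have s1 : w₂ 0 1 < w₁ 0 1 := by
    have : w₂ 0 1 < max (w₁ 0 1) (w₂ 0 1) := by
      calc w₂ 0 1 = w₂ 0 8 := s1b
        _ ≤ max (w₁ 0 8) (w₂ 0 8) := le_max_right _ _
        _ < _ := s1a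
    exact (lt_max_iff.mp this).resolve_right (lt_irrefl _)
  -- Step 2: w₂ 2 3 < w₂ 0 1
  have s2 : w₂ 2 3 < w₂ 0 1 := (h₂ 2 3 0 1 (by decide) (by decide)).2 (by decide)
  -- Step 3: w₁ 2 3 < w₂ 2 3
  have s3a : max (w₁ 2 9) (w₂ 2 9) < max (w₁ 2 3) (w₂ 2 3) :=
    (h 2 9 2 3 (by decide) (by decide)).2 (by decide)
  have s3b : w₁ 2 3 = w₁ 2 9 := (h₁ 2 3 2 9 (by decide) (by decide)).1 (by decide)
  have s3 : w₁ 2 3 < w₂ 2 3 := by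
    have : w₁ 2 3 < max (w₁ 2 3) (w₂ 2 3) := by
      calc w₁ 2 3 = w₁ 2 9 := s3b
        _ ≤ max (w₁ 2 9) (w₂ 2 9) := le_max_left _ _
        _ < _ := s3a
    exact (lt_max_iff.mp this).resolve_left (lt_irrefl _)
  -- Step 4: w₁ 2 3 = w₁ 4 5
  have s4 : w₁ 2 3 = w₁ 4 5 := (h₁ 2 3 4 5 (by decide) (by decide)).1 (by decide)
  -- Step 5: w₂ 4 5 < w₁ 4 5
  have s5a : max (w₁ 4 10) (w₂ 4 10) < max (w₁ 4 5) (w₂ 4 5) :=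
    (h 4 10 4 5 (by decide) (by decide)).2 (by decide)
  have s5b : w₂ 4 5 = w₂ 4 10 := (h₂ 4 5 4 10 (by decide) (by decide)).1 (by decide)
  have s5 : w₂ 4 5 < w₁ 4 5 := by
    have : w₂ 4 5 < max (w₁ 4 5) (w₂ 4 5) := by
      calc w₂ 4 5 = w₂ 4 10 := s5b
        _ ≤ max (w₁ 4 10) (w₂ 4 10) := le_max_right _ _
        _ < _ := s5a
    exact (lt_max_iff.mp this).resolve_right (lt_irrefl _)
  -- Step 6: w₂ 4 5 = w₂ 6 7
  have s6 : w₂ 4 5 = w₂ 6 7 := (h₂ 4 5 6 7 (by decide) (by decide)).1 (by decide)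
  -- Step 7: w₁ 6 7 < w₂ 6 7
  have s7a : max (w₁ 6 11) (w₂ 6 11) < max (w₁ 6 7) (w₂ 6 7) :=
    (h 6 11 6 7 (by decide) (by decide)).2 (by decide)
  have s7b : w₁ 6 7 = w₁ 6 11 := (h₁ 6 7 6 11 (by decide) (by decide)).1 (by decide)
  have s7 : w₁ 6 7 < w₂ 6 7 := by
    have : w₁ 6 7 < max (w₁ 6 7) (w₂ 6 7) := by
      calc w₁ 6 7 = w₁ 6 11 := s7b
        _ ≤ max (w₁ 6 11) (w₂ 6 11) := le_max_left _ _
        _ < _ := s7a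
    exact (lt_max_iff.mp this).resolve_left (lt_irrefl _)
  -- Step 8: w₁ 6 7 = w₁ 0 1
  have s8 : w₁ 6 7 = w₁ 0 1 := (h₁ 6 7 0 1 (by decide) (by decide)).1 (by decide)
  linarith
end
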